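/- arXiv:math/0208004 — 10 statements merged into one kernel-verified Lean document; each statement's English description precedes it below -/
import Mathlib

section
/- Simplex bound: for any N ≥ 2 n-dimensional subspaces P_1,...,P_N of R^m, the minimum squared chordal distance satisfies min_{i≠j} d_c²(P_i,P_j) ≤ (n(m−n)/m)·(N/(N−1)). -/
/-!
With `S = ∑ i, P i`, Cauchy–Schwarz on the diagonal of the symmetric matrix `S` gives
`(N n)² = (trace S)² ≤ m · trace (S * S) = m · ∑ i j, trace (P i * P j)`; this is the inequality
`‖∑ i, (P i - (n / m) • 1)‖² ≥ 0` for the de-traced projections behind Rankin's simplex bound.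
Since the squared chordal distances `n - trace (P i * P j)` vanish on the diagonal, their sum over
the `N (N - 1)` ordered pairs `i ≠ j` is at most `N² n (m - n) / m`, and some pair is at most the
average.
-/

open Finset Matrix

namespace Matrix

variable {ι κ : Type*} [Fintype ι] [Fintype κ]

theorem sum_diag_sq_le_trace_mul_self {A : Matrix ι ι ℝ} (hA : A.IsSymm) :
    ∑ i, A i i ^ 2 ≤ (A * A).trace := by
  have hsq : (A * A).trace = ∑ i, ∑ j, A i j ^ 2 := by
    refine sum_congr rfl fun i _ => sum_congr rfl fun j _ => ?_
    show A i j * A j i = A i j ^ 2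
    rw [hA.apply i j, sq]
  rw [hsq]
  exact sum_le_sum fun i _ => single_le_sum (fun j _ => sq_nonneg (A i j)) (mem_univ i)

theorem trace_sq_le_card_mul_trace_mul_self {A : Matrix ι ι ℝ} (hA : A.IsSymm) :
    A.trace ^ 2 ≤ Fintype.card ι * (A * A).trace :=
  calc A.trace ^ 2 ≤ Fintype.card ι * ∑ i, A i i ^ 2 := by
        simpa [trace] using sq_sum_le_card_mul_sum_sq (s := univ) (f := A.diag)
    _ ≤ Fintype.card ι * (A * A).trace := by
        gcongr; exact sum_diag_sq_le_trace_mul_self hA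

theorem sq_sum_trace_le_card_mul_sum_trace_mul (P : ι → Matrix κ κ ℝ) (hP : ∀ i, (P i).IsSymm) :
    (∑ i, (P i).trace) ^ 2 ≤ Fintype.card κ * ∑ i, ∑ j, (P i * P j).trace := by
  have hS : (∑ i, P i).IsSymm := by
    simp only [IsSymm, transpose_sum]
    exact sum_congr rfl fun i _ => hP i
  simpa only [trace_sum, sum_mul_sum] using trace_sq_le_card_mul_trace_mul_self hS

end Matrix

theorem exists_ne_le_of_sum_sum_le {ι : Type*} [Fintype ι] [Nontrivial ι] (f : ι → ι → ℝ)
    (hdiag : ∀ i, f i i = 0) {c : ℝ}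
    (h : ∑ i, ∑ j, f i j ≤ Fintype.card ι * (Fintype.card ι - 1) * c) :
    ∃ i j, i ≠ j ∧ f i j ≤ c := by
  classical
  have hsum : ∑ i, ∑ j, f i j = ∑ p ∈ univ.offDiag, f p.1 p.2 := by
    rw [← sum_product', ← diag_union_offDiag, sum_union (disjoint_diag_offDiag _), sum_diag]
    simp [hdiag]
  have hcard : ((univ.offDiag : Finset (ι × ι)).card : ℝ) =
      Fintype.card ι * (Fintype.card ι - 1) := by
    rw [offDiag_card, Nat.cast_sub (Nat.le_mul_self _)]
    simp [mul_sub]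
  obtain ⟨a, b, hab⟩ := exists_pair_ne ι
  obtain ⟨p, hp, hle⟩ := exists_le_of_sum_le (s := univ.offDiag) ⟨(a, b), by simp [hab]⟩
    (f := fun p => f p.1 p.2) (g := fun _ => c)
    (by rwa [sum_const, nsmul_eq_mul, hcard, ← hsum])
  exact ⟨p.1, p.2, (mem_offDiag.mp hp).2.2, hle⟩

theorem simplex_bound_general (n m N : ℕ) (hm : 0 < m) (hN : 2 ≤ N)
    (P : Fin N → Matrix (Fin m) (Fin m) ℝ)
    (hsymm : ∀ i, (P i)ᵀ = P i)
    (hidem : ∀ i, P i * P i = P i)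
    (htr : ∀ i, Matrix.trace (P i) = (n : ℝ)) :
    ∃ i j, i ≠ j ∧
      (n : ℝ) - Matrix.trace (P i * P j) ≤
        ((n : ℝ) * ((m : ℝ) - n) / m) * ((N : ℝ) / ((N : ℝ) - 1)) := by
  have : Nontrivial (Fin N) := Fin.nontrivial_iff_two_le.mpr hN
  have hm' : (0 : ℝ) < m := by exact_mod_cast hm
  have hN' : (N : ℝ) - 1 ≠ 0 := by
    have : (2 : ℝ) ≤ N := by exact_mod_cast hN
    linarith
  have hgram := sq_sum_trace_le_card_mul_sum_trace_mul P hsymm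
  simp only [htr, sum_const, card_univ, Fintype.card_fin, nsmul_eq_mul] at hgram
  refine exists_ne_le_of_sum_sum_le (fun i j => (n : ℝ) - (P i * P j).trace)
    (fun i => by simp only [hidem, htr, sub_self]) ?_
  have hrhs : (N * (N - 1) : ℝ) * ((n * (m - n) / m) * (N / (N - 1))) =
      N * (N * n) - (N * n) ^ 2 / m := by
    field_simp
  rw [Fintype.card_fin, hrhs]
  simp only [sum_sub_distrib, sum_const, card_univ, Fintype.card_fin, nsmul_eq_mul]
  linarith [(div_le_iff₀' hm').mpr hgram]

/-- Simplex bound: for `N ≥ 2` `n`-dimensional subspaces of `ℝ^m`, given by their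
orthogonal projection matrices `P i` (symmetric idempotents of trace `n`), some pair
has squared chordal distance `n - trace (P i * P j)` at most
`(n(m-n)/m) * (N/(N-1))`. -/
theorem simplex_bound (n m N : ℕ) (hm : 0 < m) (hnm : n ≤ m) (hN : 2 ≤ N)
    (P : Fin N → Matrix (Fin m) (Fin m) ℝ)
    (hsymm : ∀ i, (P i)ᵀ = P i)
    (hidem : ∀ i, P i * P i = P i)
    (htr : ∀ i, Matrix.trace (P i) = (n : ℝ)) :
    ∃ i j, i ≠ j ∧
      (n : ℝ) - Matrix.trace (P i * P j) ≤
        ((n : ℝ) * ((m : ℝ) - n) / m) * ((N : ℝ) / ((N : ℝ) - 1)) :=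
  simplex_bound_general n m N hm hN P hsymm hidem htr
end

section
/- Orthoplex bound: for any N n-dimensional subspaces P_1,...,P_N of R^m with N > m(m+1)/2, the minimum squared chordal distance satisfies min_{i≠j} d_c²(P_i,P_j) ≤ n(m−n)/m. -/
/-!
Subtracting `(n / m) • 1` from each projection gives traceless symmetric matrices `X i` with
Frobenius products `tr (X i * X j) = tr (P i * P j) - n² / m`, so if every chordal distance
exceeded `n (m - n) / m` the `X i` would be pairwise obtuse. Pairwise obtuse vectors are linearly
independent once they lie in a common open half-space; dropping one `X i₀` and adjoining the
identity, which is orthogonal to every `X i`, thus yields `N` linearly independent symmetric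
matrices, although symmetric matrices form a space of dimension `m (m + 1) / 2`.
-/

open Matrix

namespace LinearMap.BilinForm

variable {ι R M : Type*} [Field R] [LinearOrder R] [IsStrictOrderedRing R]
  [AddCommGroup M] [Module R M]

theorem linearIndependent_option_of_pairwise_neg {B : LinearMap.BilinForm R M}
    (hB : B.toQuadraticMap.PosDef) (hsymm : B.IsSymm) {v : ι → M}
    (hv : ∀ i j, i ≠ j → B (v i) (v j) < 0) {w : M} (hw : w ≠ 0)
    (hwv : ∀ i, B w (v i) = 0) (i₀ : ι) :
    LinearIndependent R (Option.elim' w (fun i : {i // i ≠ i₀} => v i)) := by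
  -- the whole family lies in the open half-space where `B w - B (v i₀)` is positive
  refine B.linearIndependent_of_pairwise_le_zero hB (B w - B (v i₀)) _ ?_ ?_
  · rintro (_ | ⟨i, hi⟩)
    · simpa [← hsymm.eq, hwv] using hB w hw
    · simpa [hwv] using hv i₀ i (Ne.symm hi)
  · rintro (_ | ⟨i, _⟩) (_ | ⟨j, _⟩) hij
    · exact absurd rfl hij
    · simp [hwv]
    · simp [← hsymm.eq, hwv]
    · exact (hv i j fun h => hij (by simp [h])).le

end LinearMap.BilinForm

namespace Matrix

variable {m n R : Type*}

def ofSym2 [Semiring R] : (Sym2 n → R) →ₗ[R] Matrix n n R where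
  toFun f := of fun a b => f s(a, b)
  map_add' _ _ := rfl
  map_smul' _ _ := rfl

theorem IsSymm.mem_range_ofSym2 [Semiring R] {A : Matrix n n R} (hA : A.IsSymm) :
    A ∈ LinearMap.range (ofSym2 : (Sym2 n → R) →ₗ[R] Matrix n n R) :=
  ⟨Sym2.lift ⟨fun a b => A a b, fun a b => (hA.apply a b).symm⟩, by ext a b; rfl⟩

theorem _root_.LinearIndependent.card_le_choose_of_isSymm [Fintype n] [DecidableEq n] [Field R]
    {ι : Type*} [Fintype ι] {v : ι → Matrix n n R} (hv : LinearIndependent R v)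
    (hsymm : ∀ i, (v i).IsSymm) :
    Fintype.card ι ≤ (Fintype.card n + 1).choose 2 := by
  calc Fintype.card ι = Module.finrank R (Submodule.span R (Set.range v)) :=
        (finrank_span_eq_card hv).symm
    _ ≤ Module.finrank R (LinearMap.range (ofSym2 : (Sym2 n → R) →ₗ[R] Matrix n n R)) :=
        Submodule.finrank_mono <| Submodule.span_le.mpr <| Set.range_subset_iff.mpr
          fun i => (hsymm i).mem_range_ofSym2
    _ ≤ Module.finrank R (Sym2 n → R) := LinearMap.finrank_range_le _
    _ = (Fintype.card n + 1).choose 2 := by rw [Module.finrank_fintype_fun_eq_card, Sym2.card]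

variable [Fintype m] [Fintype n]

def frobeniusForm : LinearMap.BilinForm ℝ (Matrix m n ℝ) :=
  LinearMap.mk₂ ℝ (fun A B => trace (Aᵀ * B))
    (fun _ _ _ => by simp [Matrix.add_mul, trace_add]) (fun _ _ _ => by simp [trace_smul])
    (fun _ _ _ => by simp [Matrix.mul_add, trace_add]) (fun _ _ _ => by simp [trace_smul])

@[simp]
theorem frobeniusForm_apply (A B : Matrix m n ℝ) : frobeniusForm A B = trace (Aᵀ * B) := rfl

theorem frobeniusForm_isSymm :
    (frobeniusForm : LinearMap.BilinForm ℝ (Matrix m n ℝ)).IsSymm := by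
  refine ⟨fun A B => ?_⟩
  simp only [frobeniusForm_apply]
  rw [← trace_transpose, transpose_mul, transpose_transpose]

theorem frobeniusForm_posDef :
    (frobeniusForm : LinearMap.BilinForm ℝ (Matrix m n ℝ)).toQuadraticMap.PosDef := by
  intro A hA
  have h := (posSemidef_conjTranspose_mul_self A).trace_nonneg
  have h' := mt trace_conjTranspose_mul_self_eq_zero_iff.mp hA
  simp only [conjTranspose_eq_transpose_of_trivial] at h h'
  simpa using lt_of_le_of_ne h (Ne.symm h')

theorem frobeniusForm_sub_smul_one [DecidableEq n] {P Q : Matrix n n ℝ} (hP : Pᵀ = P)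
    (c : ℝ) :
    frobeniusForm (P - c • 1) (Q - c • 1) =
      trace (P * Q) - c * trace P - c * trace Q + c ^ 2 * Fintype.card n := by
  simp only [map_sub, map_smul, LinearMap.sub_apply, LinearMap.smul_apply, frobeniusForm_apply, hP,
    transpose_one, mul_one, one_mul, trace_one, smul_eq_mul]
  ring

end Matrix

theorem orthoplex_bound_general (n m N : ℕ) (hm : 0 < m)
    (hN : m * (m + 1) / 2 < N)
    (P : Fin N → Matrix (Fin m) (Fin m) ℝ)
    (hsymm : ∀ i, (P i)ᵀ = P i)
    (htr : ∀ i, Matrix.trace (P i) = (n : ℝ)) :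
    ∃ i j, i ≠ j ∧
      (n : ℝ) - Matrix.trace (P i * P j) ≤ (n : ℝ) * ((m : ℝ) - n) / m := by
  by_contra! hfar
  have hmR : (0 : ℝ) < m := Nat.cast_pos.mpr hm
  let X i := P i - ((n : ℝ) / m) • (1 : Matrix (Fin m) (Fin m) ℝ)
  have hobtuse : ∀ i j, i ≠ j → frobeniusForm (X i) (X j) < 0 := by
    intro i j hij
    have := hfar i j hij
    rw [frobeniusForm_sub_smul_one (hsymm i), htr, htr, Fintype.card_fin]
    field_simp at this ⊢
    linarith
  have horth : ∀ i, frobeniusForm 1 (X i) = 0 := by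
    intro i
    rw [frobeniusForm_apply, transpose_one, Matrix.one_mul, trace_sub, trace_smul, trace_one, htr,
      Fintype.card_fin, smul_eq_mul, div_mul_cancel₀ _ hmR.ne', sub_self]
  have : NeZero m := ⟨hm.ne'⟩
  have hindep := LinearMap.BilinForm.linearIndependent_option_of_pairwise_neg
    frobeniusForm_posDef frobeniusForm_isSymm hobtuse one_ne_zero horth ⟨0, by omega⟩
  have hcard := hindep.card_le_choose_of_isSymm <| by
    rintro (_ | i)
    · exact isSymm_one
    · exact IsSymm.sub (hsymm i) (isSymm_one.smul _)
  rw [Fintype.card_option, Fintype.card_subtype_compl, Fintype.card_subtype_eq, Fintype.card_fin,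
    Nat.sub_add_cancel (by omega), Fintype.card_fin, Nat.choose_two_right, Nat.add_sub_cancel,
    mul_comm] at hcard
  omega

/-- Orthoplex bound: for `N > m(m+1)/2` `n`-dimensional subspaces of `ℝ^m`, given by
their orthogonal projection matrices `P i` (symmetric idempotents of trace `n`),
some pair has squared chordal distance `n - trace (P i * P j)` at most
`n(m-n)/m`. -/
theorem orthoplex_bound (n m N : ℕ) (hm : 0 < m) (hnm : n ≤ m)
    (hN : m * (m + 1) / 2 < N)
    (P : Fin N → Matrix (Fin m) (Fin m) ℝ)
    (hsymm : ∀ i, (P i)ᵀ = P i)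
    (hidem : ∀ i, P i * P i = P i)
    (htr : ∀ i, Matrix.trace (P i) = (n : ℝ)) :
    ∃ i j, i ≠ j ∧
      (n : ℝ) - Matrix.trace (P i * P j) ≤ (n : ℝ) * ((m : ℝ) - n) / m :=
  orthoplex_bound_general n m N hm hN P hsymm htr
end

section
/- For N planes (subspaces) achieving equality in the simplex bound d_c² = (n(m−n)/m)·(N/(N−1)), necessarily N ≤ m(m+1)/2. -/
open Matrix

noncomputable def symEval (m : ℕ) : Matrix (Fin m) (Fin m) ℝ →ₗ[ℝ] (Sym2 (Fin m) → ℝ) where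
  toFun M := fun s => M s.inf s.sup
  map_add' M N := by funext s; simp [Matrix.add_apply]
  map_smul' c M := by funext s; simp [Matrix.smul_apply]


/-- If `N` `n`-dimensional subspaces of `ℝ^m` (with `1 ≤ n < m`), given by their
orthogonal projection matrices, achieve equality in the simplex bound — i.e. all
pairwise squared chordal distances `n - trace (P i * P j)` equal
`(n(m-n)/m) * (N/(N-1))` — then necessarily `N ≤ m(m+1)/2`. -/
theorem simplex_equality_card_bound (n m N : ℕ) (hn : 1 ≤ n) (hnm : n < m) (hN : 2 ≤ N)
    (P : Fin N → Matrix (Fin m) (Fin m) ℝ)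
    (hsymm : ∀ i, (P i)ᵀ = P i)
    (hidem : ∀ i, P i * P i = P i)
    (htr : ∀ i, Matrix.trace (P i) = (n : ℝ))
    (heq : ∀ i j, i ≠ j →
      (n : ℝ) - Matrix.trace (P i * P j) =
        ((n : ℝ) * ((m : ℝ) - n) / m) * ((N : ℝ) / ((N : ℝ) - 1))) :
    N ≤ m * (m + 1) / 2 := by
  set c : ℝ := ((n : ℝ) * ((m : ℝ) - n) / m) * ((N : ℝ) / ((N : ℝ) - 1)) with hc
  have hnpos : (0 : ℝ) < n := by exact_mod_cast hn
  have hmpos : (0 : ℝ) < m := by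
    have : 0 < m := lt_of_le_of_lt (Nat.zero_le n) hnm
    exact_mod_cast this
  have hmn : (0 : ℝ) < (m : ℝ) - n := by
    have : (n : ℝ) < m := by exact_mod_cast hnm
    linarith
  have hN1 : (1 : ℝ) < N := by exact_mod_cast Nat.lt_of_lt_of_le one_lt_two hN
  have hcpos : 0 < c := by
    apply mul_pos
    · positivity
    · apply div_pos (by linarith) (by linarith)
  have htrij : ∀ i j, Matrix.trace (P i * P j) = if i = j then (n : ℝ) else (n : ℝ) - c := by
    intro i j
    by_cases h : i = j
    · simp [h, hidem j, htr j]
    · have := heq i j h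
      simp [h]; linarith
  -- linear independence of P
  have hli : LinearIndependent ℝ P := by
    rw [Fintype.linearIndependent_iff]
    intro g hg
    have hsum : ∑ i, g i = 0 := by
      have h1 : Matrix.trace (∑ i, g i • P i) = 0 := by rw [hg]; simp
      rw [Matrix.trace_sum] at h1
      simp only [Matrix.trace_smul, htr, smul_eq_mul] at h1
      rw [← Finset.sum_mul] at h1
      rcases mul_eq_zero.1 h1 with h | h
      · exact h
      · exact absurd h (ne_of_gt hnpos)
    have h2 : Matrix.trace ((∑ i, g i • P i) * (∑ j, g j • P j)) = 0 := by
      rw [hg]; simp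
    rw [Finset.sum_mul] at h2
    simp only [Finset.mul_sum, Matrix.smul_mul, Matrix.mul_smul, Matrix.trace_sum,
      Matrix.trace_smul, smul_eq_mul] at h2
    have h2' : ∑ i, ∑ j, g i * (g j * Matrix.trace (P i * P j)) = 0 := by
      rw [← h2]
      apply Finset.sum_congr rfl
      intro i _
      apply Finset.sum_congr rfl
      intro j _
      ring
    have h3 : ∑ i, ∑ j, g i * (g j * Matrix.trace (P i * P j))
        = c * ∑ i, (g i)^2 := by
      rw [Finset.mul_sum]
      apply Finset.sum_congr rfl
      intro i _
      have hterm : ∀ j, g i * (g j * Matrix.trace (P i * P j))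
          = (if j = i then c * (g i)^2 else 0) + (g i * g j) * ((n : ℝ) - c) := by
        intro j
        by_cases h : j = i
        · subst h
          rw [htrij j j, if_pos rfl, if_pos rfl]
          ring
        · rw [htrij i j, if_neg (fun hh => h hh.symm), if_neg h]
          ring
      rw [Finset.sum_congr rfl (fun j _ => hterm j), Finset.sum_add_distrib,
        Finset.sum_ite_eq' Finset.univ i, if_pos (Finset.mem_univ i)]
      have h0 : ∑ x : Fin N, g i * g x * ((n:ℝ) - c) = 0 := by
        rw [← Finset.sum_mul, ← Finset.mul_sum, hsum]
        ring
      rw [h0, add_zero]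
    rw [h3] at h2'
    have h4 : ∑ i, (g i)^2 = 0 := by
      rcases mul_eq_zero.1 h2' with h | h
      · exact absurd h (ne_of_gt hcpos)
      · exact h
    intro i
    have := Finset.sum_eq_zero_iff_of_nonneg (fun j _ => sq_nonneg (g j)) |>.1 h4 i
      (Finset.mem_univ i)
    exact pow_eq_zero_iff two_ne_zero |>.1 this
  -- linear independence of symEval ∘ P
  have hli2 : LinearIndependent ℝ (fun i => symEval m (P i)) := by
    rw [Fintype.linearIndependent_iff]
    intro g hg
    have hS : symEval m (∑ i, g i • P i) = 0 := by
      rw [map_sum]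
      simpa using hg
    have hSsymm : (∑ i, g i • P i)ᵀ = ∑ i, g i • P i := by
      simp [Matrix.transpose_sum, Matrix.transpose_smul, hsymm]
    set S := ∑ i, g i • P i with hSdef
    have hS0 : S = 0 := by
      ext a b
      have hz : symEval m S s(a, b) = 0 := by rw [hS]; rfl
      have hz' : S (a ⊓ b) (a ⊔ b) = 0 := hz
      rcases le_total a b with h | h
      · rw [inf_eq_left.2 h, sup_eq_right.2 h] at hz'
        simpa using hz'
      · rw [inf_eq_right.2 h, sup_eq_left.2 h] at hz'
        have hba : S b a = S a b :=
          (Matrix.transpose_apply S a b).symm.trans (by rw [hSsymm])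
        rw [hba] at hz'
        simpa using hz'
    rw [Fintype.linearIndependent_iff] at hli
    exact hli g hS0
  have hcard := hli2.fintype_card_le_finrank
  rw [Module.finrank_fintype_fun_eq_card, Sym2.card, Fintype.card_fin,
    Nat.choose_two_right, Fintype.card_fin] at hcard
  simpa [Nat.mul_comm] using hcard
end

section
/- For any two distinct lines (1-dimensional subspaces) through the origin in R^m, d_c²(P,Q) = 1 − (u·v)², where u and v are unit vectors spanning P and Q; consequently the simplex bound for N lines in R^m states min_{i≠j}(1 − (u_i·u_j)²) ≤ ((m−1)/m)·(N/(N−1)), i.e., max_{i≠j}(u_i·u_j)² ≥ (N−m)/(m(N−1)). -/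
open Real
open scoped RealInnerProductSpace

/-- Lines through the origin in `ℝ^m` spanned by unit vectors: the squared chordal
distance between the lines spanned by `u`, `v` (whose principal angle `θ` satisfies
`cos θ = |⟪u,v⟫|`) is `1 - ⟪u,v⟫²`; consequently, for `N ≥ 2` unit vectors the
simplex bound gives a pair with `⟪u i, u j⟫² ≥ (N-m)/(m(N-1))`. -/
theorem line_packing_simplex_bound (m N : ℕ) (hm : 0 < m) (hN : 2 ≤ N)
    (u : Fin N → EuclideanSpace ℝ (Fin m)) (hu : ∀ i, ‖u i‖ = 1) :
    (∀ i j, Real.sin (Real.arccos |⟪u i, u j⟫|) ^ 2 = 1 - ⟪u i, u j⟫ ^ 2) ∧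
    (∃ i j, i ≠ j ∧ ((N : ℝ) - m) / ((m : ℝ) * ((N : ℝ) - 1)) ≤ ⟪u i, u j⟫ ^ 2) := by
  have hinner : ∀ i j, ⟪u i, u j⟫ = ∑ k, u i k * u j k := by
    intro i j
    simp [PiLp.inner_apply, RCLike.inner_apply, mul_comm]
  have hdiag : ∀ i, ⟪u i, u i⟫ = 1 := by
    intro i
    rw [real_inner_self_eq_norm_sq, hu i]; norm_num
  have habs : ∀ i j, |⟪u i, u j⟫| ≤ 1 := by
    intro i j
    have := abs_real_inner_le_norm (u i) (u j)
    rwa [hu i, hu j, one_mul] at this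
  constructor
  · intro i j
    have h1 : (1 : ℝ) - |⟪u i, u j⟫| ^ 2 ≥ 0 := by
      have := habs i j
      nlinarith [abs_nonneg ⟪u i, u j⟫]
    rw [Real.sin_arccos, Real.sq_sqrt h1, sq_abs]
  · -- simplex (Welch) bound
    set A : Fin m → Fin m → ℝ := fun k l => ∑ i, u i k * u i l with hA
    -- total sum of squared inner products equals Frobenius norm squared of A
    have claim1 : (∑ i, ∑ j, ⟪u i, u j⟫ ^ 2) = ∑ k, ∑ l, (A k l) ^ 2 := by
      have : (∑ i, ∑ j, ⟪u i, u j⟫ ^ 2)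
          = ∑ i, ∑ j, ∑ k, ∑ l, (u i k * u i l) * (u j k * u j l) := by
        refine Finset.sum_congr rfl fun i _ => Finset.sum_congr rfl fun j _ => ?_
        rw [hinner, sq, Finset.sum_mul_sum]
        exact Finset.sum_congr rfl fun k _ => Finset.sum_congr rfl fun l _ => by ring
      have swap4 : ∀ (f : Fin N → Fin N → Fin m → Fin m → ℝ),
          (∑ i, ∑ j, ∑ k, ∑ l, f i j k l) = ∑ k, ∑ l, ∑ i, ∑ j, f i j k l := by
        intro f
        calc (∑ i, ∑ j, ∑ k, ∑ l, f i j k l)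
            = ∑ i, ∑ k, ∑ j, ∑ l, f i j k l :=
              Finset.sum_congr rfl fun i _ => by rw [Finset.sum_comm]
          _ = ∑ k, ∑ i, ∑ j, ∑ l, f i j k l := by rw [Finset.sum_comm]
          _ = ∑ k, ∑ i, ∑ l, ∑ j, f i j k l :=
              Finset.sum_congr rfl fun k _ => Finset.sum_congr rfl fun i _ => by
                rw [Finset.sum_comm]
          _ = ∑ k, ∑ l, ∑ i, ∑ j, f i j k l :=
              Finset.sum_congr rfl fun k _ => by rw [Finset.sum_comm]
      rw [this, swap4]
      refine Finset.sum_congr rfl fun k _ => Finset.sum_congr rfl fun l _ => ?_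
      rw [sq, Finset.sum_mul_sum]
    -- trace of A is N
    have htrace : (∑ k, A k k) = N := by
      rw [hA]
      simp only
      rw [Finset.sum_comm]
      have : ∀ i : Fin N, (∑ k, u i k * u i k) = 1 := by
        intro i
        have := hdiag i
        rw [hinner] at this
        exact this
      simp [this]
    -- Cauchy–Schwarz: N² ≤ m * Σ (A k k)²
    have hCS : (N : ℝ) ^ 2 ≤ (m : ℝ) * ∑ k, (A k k) ^ 2 := by
      have := sq_sum_le_card_mul_sum_sq (s := (Finset.univ : Finset (Fin m)))
        (f := fun k => A k k)
      simpa [htrace] using this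
    have hdiagle : (∑ k, (A k k) ^ 2) ≤ ∑ k, ∑ l, (A k l) ^ 2 := by
      refine Finset.sum_le_sum fun k _ => ?_
      exact Finset.single_le_sum (fun l _ => sq_nonneg (A k l)) (Finset.mem_univ k)
    have hS : (N : ℝ) ^ 2 / m ≤ ∑ i, ∑ j, ⟪u i, u j⟫ ^ 2 := by
      rw [claim1]
      rw [div_le_iff₀ (by positivity : (0:ℝ) < (m:ℝ))]
      calc (N:ℝ)^2 ≤ (m : ℝ) * ∑ k, (A k k) ^ 2 := hCS
        _ ≤ (m : ℝ) * ∑ k, ∑ l, (A k l) ^ 2 := by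
            exact mul_le_mul_of_nonneg_left hdiagle (by positivity)
        _ = (∑ k, ∑ l, (A k l) ^ 2) * m := by ring
    by_contra hcon
    push_neg at hcon
    set c : ℝ := ((N : ℝ) - m) / ((m : ℝ) * ((N : ℝ) - 1)) with hc
    have hlt : ∀ i j : Fin N, i ≠ j → ⟪u i, u j⟫ ^ 2 < c := by
      intro i j hij
      exact hcon i j hij
    have hNR : (2:ℝ) ≤ (N:ℝ) := by exact_mod_cast hN
    -- bound the full sum strictly
    have hsum : (∑ i, ∑ j, ⟪u i, u j⟫ ^ 2) < N * (1 + ((N:ℝ) - 1) * c) := by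
      have hrow : ∀ i : Fin N, (∑ j, ⟪u i, u j⟫ ^ 2) < 1 + ((N:ℝ) - 1) * c := by
        intro i
        rw [← Finset.add_sum_erase _ _ (Finset.mem_univ i), hdiag, one_pow]
        have hne : (Finset.univ.erase i).Nonempty := by
          rw [← Finset.card_pos, Finset.card_erase_of_mem (Finset.mem_univ i),
            Finset.card_univ, Fintype.card_fin]
          omega
        have : (∑ j ∈ Finset.univ.erase i, ⟪u i, u j⟫ ^ 2)
            < ∑ _j ∈ Finset.univ.erase i, c := by
          refine Finset.sum_lt_sum_of_nonempty hne fun j hj => ?_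
          exact hlt i j (Finset.ne_of_mem_erase hj).symm
        rw [Finset.sum_const, Finset.card_erase_of_mem (Finset.mem_univ i),
          Finset.card_univ, Fintype.card_fin] at this
        have hcard : ((N - 1 : ℕ) : ℝ) = (N:ℝ) - 1 := by
          have : (1:ℕ) ≤ N := by omega
          push_cast [this]; ring
        rw [nsmul_eq_mul, hcard] at this
        linarith
      calc (∑ i, ∑ j, ⟪u i, u j⟫ ^ 2)
          < ∑ _i : Fin N, (1 + ((N:ℝ) - 1) * c) := by
            refine Finset.sum_lt_sum_of_nonempty ?_ fun i _ => hrow i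
            exact ⟨⟨0, by omega⟩, Finset.mem_univ _⟩
        _ = N * (1 + ((N:ℝ) - 1) * c) := by
            rw [Finset.sum_const, Finset.card_univ, Fintype.card_fin, nsmul_eq_mul]
    have heq : (N:ℝ) * (1 + ((N:ℝ) - 1) * c) = (N:ℝ) ^ 2 / m := by
      rw [hc]
      have hm' : (m:ℝ) ≠ 0 := by positivity
      have hN1 : (N:ℝ) - 1 ≠ 0 := by linarith
      field_simp
      ring
    rw [heq] at hsum
    linarith
end

section
/- There exist 6 lines through the origin in R^3 (the diagonals of a regular icosahedron) such that the angle between any two of them equals arccos(1/√5); equivalently, 6 unit vectors u_1,...,u_6 in R^3 with (u_i·u_j)² = 1/5 for all i ≠ j, achieving equality in the simplex bound for N=6, m=3. -/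
open scoped RealInnerProductSpace goldenRatio

/-! The six diagonals of the regular icosahedron are spanned by the cyclic permutations of
`(0, ±1, φ)`. Each has squared length `1 + φ² = φ + 2`, and any two distinct ones have inner
product `±φ`, so after normalisation the squared inner products are `φ² / (φ + 2)² = 1/5`,
because `(φ + 2)² = 5 φ²` follows from `φ² = φ + 1`. -/

theorem real_inner_inv_norm_smul_sq {F : Type*} [NormedAddCommGroup F] [InnerProductSpace ℝ F]
    (x y : F) : ⟪‖x‖⁻¹ • x, ‖y‖⁻¹ • y⟫ ^ 2 = ⟪x, y⟫ ^ 2 / (‖x‖ ^ 2 * ‖y‖ ^ 2) := by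
  rw [real_inner_smul_left, real_inner_smul_right]
  field_simp

theorem Real.goldenRatio_add_two_sq : (φ + 2) ^ 2 = 5 * φ ^ 2 := by
  rw [add_sq, Real.goldenRatio_sq]
  ring

noncomputable def icosahedronDiagonal : Fin 6 → EuclideanSpace ℝ (Fin 3) :=
  ![!₂[0, 1, φ], !₂[0, -1, φ], !₂[1, φ, 0], !₂[-1, φ, 0], !₂[φ, 0, 1], !₂[φ, 0, -1]]

theorem norm_icosahedronDiagonal_sq (i : Fin 6) : ‖icosahedronDiagonal i‖ ^ 2 = φ + 2 := by
  rw [EuclideanSpace.real_norm_sq_eq, Fin.sum_univ_three]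
  fin_cases i <;> simp [icosahedronDiagonal, Real.goldenRatio_sq] <;> ring

theorem icosahedronDiagonal_ne_zero (i : Fin 6) : icosahedronDiagonal i ≠ 0 := by
  rw [← norm_ne_zero_iff, ← pow_ne_zero_iff two_ne_zero, norm_icosahedronDiagonal_sq]
  positivity

theorem inner_icosahedronDiagonal_sq {i j : Fin 6} (hij : i ≠ j) :
    ⟪icosahedronDiagonal i, icosahedronDiagonal j⟫ ^ 2 = φ ^ 2 := by
  fin_cases i <;> fin_cases j <;> first
    | exact absurd rfl hij
    | simp [icosahedronDiagonal, PiLp.inner_apply, Fin.sum_univ_three, ← sq, Real.goldenRatio_sq]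

/-- There exist 6 lines through the origin in `ℝ³` (the diagonals of a regular
icosahedron), i.e. 6 unit vectors, such that `⟪u i, u j⟫² = 1/5` for all `i ≠ j` —
the angle between any two lines is `arccos (1/√5)`, achieving equality in the
simplex bound `(N-m)/(m(N-1)) = 1/5` for `N = 6`, `m = 3`. -/
theorem six_lines_in_R3 :
    ∃ u : Fin 6 → EuclideanSpace ℝ (Fin 3),
      (∀ i, ‖u i‖ = 1) ∧
      (∀ i j, i ≠ j → ⟪u i, u j⟫ ^ 2 = 1 / 5) ∧
      ((6 : ℝ) - 3) / (3 * ((6 : ℝ) - 1)) = 1 / 5 := by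
  refine ⟨fun i => ‖icosahedronDiagonal i‖⁻¹ • icosahedronDiagonal i,
    fun i => norm_smul_inv_norm (icosahedronDiagonal_ne_zero i), fun i j hij => ?_, by norm_num⟩
  rw [real_inner_inv_norm_smul_sq, inner_icosahedronDiagonal_sq hij,
    norm_icosahedronDiagonal_sq, norm_icosahedronDiagonal_sq, ← sq,
    Real.goldenRatio_add_two_sq]
  field_simp [Real.goldenRatio_ne_zero]
end

section
/- There exist 28 equiangular lines in R^7 with common angle arccos(1/3), achieving equality in the simplex bound: 28 unit vectors u_1,...,u_28 in R^7 with (u_i·u_j)² = 1/9 for all i ≠ j, and (28−7)/(7·27) = 1/9. -/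
/-!
For each 2-subset `s` of `{0, …, 7}` take `v_s = 4·𝟙_s − 𝟙 = (3, 3, −1, …, −1)` (up to order)
in `ℝ⁸`. All of them are orthogonal to `𝟙`, so they live in a copy of `ℝ⁷`, and
`⟪v_s, v_t⟫ = 16·|s ∩ t| − 8`, which is `24` for `s = t` and `±8` otherwise because two distinct
2-sets share at most one point.
-/

open scoped RealInnerProductSpace

open Finset Module

section IndicatorVec

variable {ι : Type*} [Fintype ι] [DecidableEq ι]

noncomputable def indicatorVec (s : Finset ι) : EuclideanSpace ℝ ι :=
  WithLp.toLp 2 fun i => if i ∈ s then 1 else 0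

theorem inner_indicatorVec (s t : Finset ι) :
    ⟪indicatorVec s, indicatorVec t⟫ = #(s ∩ t) := by
  simp [indicatorVec, PiLp.inner_apply]

theorem indicatorVec_univ_ne_zero [Nonempty ι] : indicatorVec (univ : Finset ι) ≠ 0 := by
  intro h
  simpa [indicatorVec] using congrArg (· (Classical.arbitrary ι)) h

end IndicatorVec

theorem Finset.card_inter_lt_of_ne {α : Type*} [DecidableEq α] {s t : Finset α} {k : ℕ}
    (hs : #s = k) (ht : #t = k) (hst : s ≠ t) : #(s ∩ t) < k := by
  by_contra! h
  have hs' := eq_of_subset_of_card_le inter_subset_left (hs ▸ h)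
  have ht' := eq_of_subset_of_card_le inter_subset_right (ht ▸ h)
  exact hst (hs'.symm.trans ht')

noncomputable def pairVec (s : Finset (Fin 8)) : EuclideanSpace ℝ (Fin 8) :=
  (4 : ℝ) • indicatorVec s - indicatorVec univ

theorem inner_pairVec {s t : Finset (Fin 8)} (hs : #s = 2) (ht : #t = 2) :
    ⟪pairVec s, pairVec t⟫ = 16 * #(s ∩ t) - 8 := by
  simp only [pairVec, inner_sub_left, inner_sub_right, real_inner_smul_left,
    real_inner_smul_right, inner_indicatorVec, inter_univ, univ_inter, hs, ht, card_univ,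
    Fintype.card_fin]
  ring

theorem pairVec_mem_orthogonal {s : Finset (Fin 8)} (hs : #s = 2) :
    pairVec s ∈ (ℝ ∙ indicatorVec univ)ᗮ := by
  rw [Submodule.mem_orthogonal_singleton_iff_inner_right]
  simp only [pairVec, inner_sub_right, real_inner_smul_right, inner_indicatorVec, univ_inter,
    hs, card_univ, Fintype.card_fin]
  norm_num

theorem norm_pairVec {s : Finset (Fin 8)} (hs : #s = 2) : ‖pairVec s‖ = √24 := by
  rw [norm_eq_sqrt_real_inner, inner_pairVec hs hs, inter_self, hs]
  norm_num

theorem inner_pairVec_sq_of_ne {s t : Finset (Fin 8)} (hs : #s = 2) (ht : #t = 2)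
    (hst : s ≠ t) : ⟪pairVec s, pairVec t⟫ ^ 2 = 64 := by
  have h := card_inter_lt_of_ne hs ht hst
  rw [inner_pairVec hs ht]
  interval_cases #(s ∩ t) <;> norm_num

noncomputable def pairLine (s : Finset (Fin 8)) : EuclideanSpace ℝ (Fin 8) :=
  (√24)⁻¹ • pairVec s

theorem pairLine_mem_orthogonal {s : Finset (Fin 8)} (hs : #s = 2) :
    pairLine s ∈ (ℝ ∙ indicatorVec univ)ᗮ :=
  Submodule.smul_mem _ _ (pairVec_mem_orthogonal hs)

theorem norm_pairLine {s : Finset (Fin 8)} (hs : #s = 2) : ‖pairLine s‖ = 1 := by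
  rw [pairLine, norm_smul, norm_pairVec hs, norm_inv, Real.norm_of_nonneg (by positivity)]
  exact inv_mul_cancel₀ (by positivity)

theorem inner_pairLine_sq_of_ne {s t : Finset (Fin 8)} (hs : #s = 2) (ht : #t = 2)
    (hst : s ≠ t) : ⟪pairLine s, pairLine t⟫ ^ 2 = 1 / 9 := by
  rw [pairLine, pairLine, real_inner_smul_left, real_inner_smul_right, mul_pow, mul_pow,
    inner_pairVec_sq_of_ne hs ht hst, inv_pow, Real.sq_sqrt (by norm_num)]
  norm_num

/-- There exist 28 equiangular lines in `ℝ⁷` with common angle `arccos (1/3)`: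
28 unit vectors with `⟪u i, u j⟫² = 1/9` for all `i ≠ j`, achieving equality in the
simplex bound `(28-7)/(7·27) = 1/9`. -/
theorem equiangular_28_lines_in_R7 :
    ∃ u : Fin 28 → EuclideanSpace ℝ (Fin 7),
      (∀ i, ‖u i‖ = 1) ∧
      (∀ i j, i ≠ j → ⟪u i, u j⟫ ^ 2 = 1 / 9) ∧
      ((28 : ℝ) - 7) / (7 * ((28 : ℝ) - 1)) = 1 / 9 := by
  let pairs : Fin 28 ≃ {s : Finset (Fin 8) // #s = 2} :=
    (Fintype.equivFinOfCardEq (by simp [Nat.choose])).symm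
  have : Fact (finrank ℝ (EuclideanSpace ℝ (Fin 8)) = 7 + 1) := ⟨finrank_euclideanSpace_fin⟩
  let toR7 := (OrthonormalBasis.fromOrthogonalSpanSingleton (𝕜 := ℝ) 7
    (indicatorVec_univ_ne_zero (ι := Fin 8))).repr
  let u i := toR7 ⟨pairLine (pairs i), pairLine_mem_orthogonal (pairs i).2⟩
  refine ⟨u, fun i => ?_, fun i j hij => ?_, by norm_num⟩
  · rw [LinearIsometryEquiv.norm_map, Submodule.coe_norm]
    exact norm_pairLine (pairs i).2
  · rw [LinearIsometryEquiv.inner_map_map, Submodule.coe_inner]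
    exact inner_pairLine_sq_of_ne (pairs i).2 (pairs j).2
      (Subtype.coe_injective.ne (pairs.injective.ne hij))
end

section
/- There exist 3 two-dimensional subspaces of R^4 such that each pair has both principal angles equal to π/3, giving pairwise d_c² = 3/2, which achieves the simplex bound (n(m−n)/m)(N/(N−1)) = (4/4)(3/2) = 3/2 for N=3, n=2, m=4. -/
open Matrix Real

noncomputable def B0 : Matrix (Fin 2) (Fin 4) ℝ := !![1, 0, 1, 0; 0, 1, 0, 1]
noncomputable def B1 : Matrix (Fin 2) (Fin 4) ℝ :=
  !![1, 0, -1/2, Real.sqrt 3 / 2; 0, 1, -Real.sqrt 3 / 2, -1/2]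
noncomputable def B2 : Matrix (Fin 2) (Fin 4) ℝ :=
  !![1, 0, -1/2, -Real.sqrt 3 / 2; 0, 1, Real.sqrt 3 / 2, -1/2]
noncomputable def Gm : Matrix (Fin 2) (Fin 2) ℝ :=
  !![1/2, -Real.sqrt 3 / 2; Real.sqrt 3 / 2, 1/2]

lemma h3 : Real.sqrt 3 * Real.sqrt 3 = 3 := Real.mul_self_sqrt (by norm_num)

lemma hB00 : B0 * B0ᵀ = (2:ℝ) • 1 := by
  ext a b; fin_cases a <;> fin_cases b <;>
    simp [B0, Matrix.mul_apply, Fin.sum_univ_four, Matrix.one_apply, Matrix.transpose_apply, Matrix.cons_val', Matrix.cons_val_zero, Matrix.cons_val_one, Matrix.head_cons, Matrix.empty_val', Matrix.cons_val_fin_one, Matrix.vecHead, Matrix.vecTail] <;> nlinarith [h3]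

lemma hB11 : B1 * B1ᵀ = (2:ℝ) • 1 := by
  ext a b; fin_cases a <;> fin_cases b <;>
    simp [B1, Matrix.mul_apply, Fin.sum_univ_four, Matrix.one_apply, Matrix.transpose_apply, Matrix.cons_val', Matrix.cons_val_zero, Matrix.cons_val_one, Matrix.head_cons, Matrix.empty_val', Matrix.cons_val_fin_one, Matrix.vecHead, Matrix.vecTail] <;> nlinarith [h3]

lemma hB22 : B2 * B2ᵀ = (2:ℝ) • 1 := by
  ext a b; fin_cases a <;> fin_cases b <;>
    simp [B2, Matrix.mul_apply, Fin.sum_univ_four, Matrix.one_apply, Matrix.transpose_apply, Matrix.cons_val', Matrix.cons_val_zero, Matrix.cons_val_one, Matrix.head_cons, Matrix.empty_val', Matrix.cons_val_fin_one, Matrix.vecHead, Matrix.vecTail] <;> nlinarith [h3]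

lemma hB01 : B0 * B1ᵀ = Gm := by
  ext a b; fin_cases a <;> fin_cases b <;>
    simp [B0, B1, Gm, Matrix.mul_apply, Fin.sum_univ_four, Matrix.transpose_apply, Matrix.cons_val', Matrix.cons_val_zero, Matrix.cons_val_one, Matrix.head_cons, Matrix.empty_val', Matrix.cons_val_fin_one, Matrix.vecHead, Matrix.vecTail] <;> nlinarith [h3]

lemma hB02 : B0 * B2ᵀ = Gmᵀ := by
  ext a b; fin_cases a <;> fin_cases b <;>
    simp [B0, B2, Gm, Matrix.mul_apply, Fin.sum_univ_four, Matrix.transpose_apply, Matrix.cons_val', Matrix.cons_val_zero, Matrix.cons_val_one, Matrix.head_cons, Matrix.empty_val', Matrix.cons_val_fin_one, Matrix.vecHead, Matrix.vecTail] <;> nlinarith [h3]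

lemma hB12 : B1 * B2ᵀ = Gm := by
  ext a b; fin_cases a <;> fin_cases b <;>
    simp [B1, B2, Gm, Matrix.mul_apply, Fin.sum_univ_four, Matrix.transpose_apply, Matrix.cons_val', Matrix.cons_val_zero, Matrix.cons_val_one, Matrix.head_cons, Matrix.empty_val', Matrix.cons_val_fin_one, Matrix.vecHead, Matrix.vecTail] <;> nlinarith [h3]

lemma hB10 : B1 * B0ᵀ = Gmᵀ := by
  ext a b; fin_cases a <;> fin_cases b <;>
    simp [B0, B1, Gm, Matrix.mul_apply, Fin.sum_univ_four, Matrix.transpose_apply, Matrix.cons_val', Matrix.cons_val_zero, Matrix.cons_val_one, Matrix.head_cons, Matrix.empty_val', Matrix.cons_val_fin_one, Matrix.vecHead, Matrix.vecTail] <;> nlinarith [h3]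

lemma hB20 : B2 * B0ᵀ = Gm := by
  ext a b; fin_cases a <;> fin_cases b <;>
    simp [B0, B2, Gm, Matrix.mul_apply, Fin.sum_univ_four, Matrix.transpose_apply, Matrix.cons_val', Matrix.cons_val_zero, Matrix.cons_val_one, Matrix.head_cons, Matrix.empty_val', Matrix.cons_val_fin_one, Matrix.vecHead, Matrix.vecTail] <;> nlinarith [h3]

lemma hB21 : B2 * B1ᵀ = Gmᵀ := by
  ext a b; fin_cases a <;> fin_cases b <;>
    simp [B1, B2, Gm, Matrix.mul_apply, Fin.sum_univ_four, Matrix.transpose_apply, Matrix.cons_val', Matrix.cons_val_zero, Matrix.cons_val_one, Matrix.head_cons, Matrix.empty_val', Matrix.cons_val_fin_one, Matrix.vecHead, Matrix.vecTail] <;> nlinarith [h3]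

lemma hG : Gm * Gmᵀ = 1 := by
  ext a b; fin_cases a <;> fin_cases b <;>
    simp [Gm, Matrix.mul_apply, Fin.sum_univ_two, Matrix.one_apply, Matrix.transpose_apply, Matrix.cons_val', Matrix.cons_val_zero, Matrix.cons_val_one, Matrix.head_cons, Matrix.empty_val', Matrix.cons_val_fin_one, Matrix.vecHead, Matrix.vecTail] <;> nlinarith [h3]

lemma hGT : Gmᵀ * Gm = 1 := by
  ext a b; fin_cases a <;> fin_cases b <;>
    simp [Gm, Matrix.mul_apply, Fin.sum_univ_two, Matrix.one_apply, Matrix.transpose_apply, Matrix.cons_val', Matrix.cons_val_zero, Matrix.cons_val_one, Matrix.head_cons, Matrix.empty_val', Matrix.cons_val_fin_one, Matrix.vecHead, Matrix.vecTail] <;> nlinarith [h3]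

/-- There exist 3 two-dimensional subspaces of `ℝ⁴` (given by orthonormal generator
matrices `A i`) such that for each pair both principal angles equal `π/3` — encoded
by `M Mᵀ = cos²(π/3) • 1` for `M = A i * (A j)ᵀ`, i.e. both singular values of `M`
are `cos (π/3)` — so each pairwise squared chordal distance is
`2 - trace (M Mᵀ) = 3/2`, achieving the simplex bound
`(n(m-n)/m)(N/(N-1)) = (2·2/4)·(3/2) = 3/2`. -/
theorem three_planes_in_R4 :
    ∃ A : Fin 3 → Matrix (Fin 2) (Fin 4) ℝ,
      (∀ i, A i * (A i)ᵀ = 1) ∧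
      (∀ i j, i ≠ j →
        (A i * (A j)ᵀ) * (A i * (A j)ᵀ)ᵀ =
          (Real.cos (π / 3) ^ 2) • (1 : Matrix (Fin 2) (Fin 2) ℝ) ∧
        (2 : ℝ) - Matrix.trace ((A i * (A j)ᵀ) * (A i * (A j)ᵀ)ᵀ) = 3 / 2) ∧
      ((2 : ℝ) * (4 - 2) / 4) * ((3 : ℝ) / (3 - 1)) = 3 / 2 := by
  have h2 : Real.sqrt 2 * Real.sqrt 2 = 2 := Real.mul_self_sqrt (by norm_num)
  have h2ne : Real.sqrt 2 ≠ 0 := by positivity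
  set c : ℝ := (Real.sqrt 2)⁻¹ with hc
  have hcc : c * c = 1/2 := by
    rw [hc, ← mul_inv, h2]; norm_num
  refine ⟨fun i => c • ![B0, B1, B2] i, ?_, ?_, by norm_num⟩
  · intro i
    have hsm : ∀ X : Matrix (Fin 2) (Fin 4) ℝ, (c • X) * (c • X)ᵀ = (c*c) • (X * Xᵀ) := by
      intro X
      rw [Matrix.transpose_smul, Matrix.smul_mul, Matrix.mul_smul, smul_smul]
    fin_cases i
    · show (c • B0) * (c • B0)ᵀ = 1
      rw [hsm, hcc, hB00, smul_smul]; norm_num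
    · show (c • B1) * (c • B1)ᵀ = 1
      rw [hsm, hcc, hB11, smul_smul]; norm_num
    · show (c • B2) * (c • B2)ᵀ = 1
      rw [hsm, hcc, hB22, smul_smul]; norm_num
  · intro i j hij
    have hsm : ∀ X Y : Matrix (Fin 2) (Fin 4) ℝ,
        ((c • X) * (c • Y)ᵀ) * (((c • X) * (c • Y)ᵀ))ᵀ
          = ((c*c)*(c*c)) • ((X * Yᵀ) * (X * Yᵀ)ᵀ) := by
      intro X Y
      simp only [Matrix.transpose_smul, Matrix.smul_mul, Matrix.mul_smul, smul_smul]
    have key : ((c • ![B0, B1, B2] i) * (c • ![B0, B1, B2] j)ᵀ) *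
        (((c • ![B0, B1, B2] i) * (c • ![B0, B1, B2] j)ᵀ))ᵀ
          = ((1:ℝ)/4) • (1 : Matrix (Fin 2) (Fin 2) ℝ) := by
      rw [hsm, hcc]
      fin_cases i <;> fin_cases j <;> (try exact absurd rfl hij) <;>
        (simp [hB01, hB02, hB12, hB10, hB20, hB21, hG, hGT]; norm_num)
    rw [key, Real.cos_pi_div_three]
    refine ⟨by norm_num, ?_⟩
    rw [Matrix.trace_smul, Matrix.trace_one]
    norm_num
end

section
/- There exist 18 two-dimensional subspaces of R^4 with pairwise d_c² = 1, achieving the orthoplex bound n(m−n)/m = 1 for N = 18 > m(m+1)/2 = 10: namely, the planes spanned by pairs of mutually perpendicular minimal vectors of the D_4 lattice, with principal angle pairs (0, π/2), (π/4, π/4), or (π/2, π/2). -/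
/-!
Write each plane as the row space of `(1/√2) • B` with `B` an integer matrix whose rows are
orthogonal minimal vectors of `D₄`. Every product `A i * (A j)ᵀ` is then `1/2` times the integer
matrix `B i * (B j)ᵀ`, so orthonormality, distinctness of the projections and the possible
principal angles become identities among small integer matrices, which are checked by
computation. In each of the three angle cases `trace (M * Mᵀ) ∈ {0, 1}`, whence `d_c² ≥ 1`.
-/

open Matrix

section Scaling

variable {R S : Type*} [CommRing R] [CommRing S] {m n p : Type*} [Fintype n]

theorem smul_map_mul_transpose_smul_map (f : R →+* S) (c : S) (X : Matrix m n R)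
    (Y : Matrix p n R) : (c • X.map f) * (c • Y.map f)ᵀ = (c * c) • (X * Yᵀ).map f := by
  rw [transpose_smul, ← transpose_map, Matrix.smul_mul, Matrix.mul_smul, smul_smul,
    ← Matrix.map_mul]

theorem transpose_smul_map_mul_smul_map (f : R →+* S) (c : S) (X : Matrix n m R)
    (Y : Matrix n p R) : (c • X.map f)ᵀ * (c • Y.map f) = (c * c) • (Xᵀ * Y).map f := by
  rw [transpose_smul, ← transpose_map, Matrix.smul_mul, Matrix.mul_smul, smul_smul,
    ← Matrix.map_mul]

end Scaling

section PrincipalAngles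

variable {n : Type*} [Fintype n]

/-- The squared cosines of the principal angles between two planes with orthonormal generator
matrices `P`, `Q` are the eigenvalues of `M * Mᵀ`, `M = P * Qᵀ`; the three cases are the angle
pairs `(π/4, π/4)`, `(0, π/2)` and `(π/2, π/2)`. -/
def HasD4PrincipalAngles (M : Matrix (Fin 2) n ℝ) : Prop :=
  M * Mᵀ = (1 / 2 : ℝ) • 1 ∨ ((M * Mᵀ) * (M * Mᵀ) = M * Mᵀ ∧ trace (M * Mᵀ) = 1) ∨ M = 0

/-- `HasD4PrincipalAngles ((1 / 2) • N)`, cleared of denominators so that it is decidable. -/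
def HasScaledD4PrincipalAngles (N : Matrix (Fin 2) n ℤ) : Prop :=
  N * Nᵀ = 2 • 1 ∨ ((N * Nᵀ) * (N * Nᵀ) = 4 • (N * Nᵀ) ∧ trace (N * Nᵀ) = 4) ∨ N = 0

namespace HasD4PrincipalAngles

variable {M : Matrix (Fin 2) n ℝ}

theorem trace_mul_transpose_eq_one (h : HasD4PrincipalAngles M) (hM : M ≠ 0) :
    trace (M * Mᵀ) = 1 := by
  rcases h with hhalf | ⟨-, htrace⟩ | hzero
  · rw [hhalf, trace_smul, trace_one]
    norm_num
  · exact htrace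
  · exact absurd hzero hM

theorem trace_mul_transpose_le_one (h : HasD4PrincipalAngles M) : trace (M * Mᵀ) ≤ 1 := by
  by_cases hM : M = 0
  · simp [hM]
  · exact (h.trace_mul_transpose_eq_one hM).le

end HasD4PrincipalAngles

theorem HasScaledD4PrincipalAngles.half_smul_map {N : Matrix (Fin 2) n ℤ}
    (h : HasScaledD4PrincipalAngles N) :
    HasD4PrincipalAngles ((1 / 2 : ℝ) • N.map (Int.castRingHom ℝ)) := by
  set castHom := (Int.castRingHom ℝ).mapMatrix (m := Fin 2)
  have hgram : (1 / 2 : ℝ) • N.map (Int.castRingHom ℝ) *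
      ((1 / 2 : ℝ) • N.map (Int.castRingHom ℝ))ᵀ = (1 / 4 : ℝ) • castHom (N * Nᵀ) := by
    rw [smul_map_mul_transpose_smul_map, RingHom.mapMatrix_apply]
    norm_num
  rcases h with hhalf | ⟨hidem, htrace⟩ | hzero
  · left
    rw [hgram, hhalf, map_nsmul, map_one, smul_comm, ← smul_assoc]
    norm_num
  · right; left
    constructor
    · rw [hgram, Matrix.smul_mul, Matrix.mul_smul, smul_smul, ← map_mul, hidem, map_nsmul,
        smul_comm, ← smul_assoc]
      norm_num
    · rw [hgram, trace_smul, RingHom.mapMatrix_apply, ← AddMonoidHom.map_trace, htrace]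
      norm_num
  · right; right
    simp [hzero]

end PrincipalAngles

theorem Int.eq_neg_one_or_zero_or_one_of_sum_sq_eq_two {ι : Type*} [Fintype ι] {v : ι → ℤ}
    (hv : ∑ l, v l ^ 2 = 2) (l : ι) : v l = -1 ∨ v l = 0 ∨ v l = 1 := by
  have hle : v l ^ 2 ≤ 2 :=
    hv ▸ Finset.single_le_sum (fun j _ => sq_nonneg (v j)) (Finset.mem_univ l)
  have hlo : -1 ≤ v l := by nlinarith
  have hhi : v l ≤ 1 := by nlinarith
  omega

def d4PlaneGenerators : Fin 18 → Matrix (Fin 2) (Fin 4) ℤ := ![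
  !![1,1,0,0; 0,0,1,1], !![1,1,0,0; 0,0,1,-1], !![1,-1,0,0; 0,0,1,1], !![1,-1,0,0; 0,0,1,-1],
  !![1,0,1,0; 0,1,0,1], !![1,0,1,0; 0,1,0,-1], !![1,0,-1,0; 0,1,0,1], !![1,0,-1,0; 0,1,0,-1],
  !![1,0,0,1; 0,1,1,0], !![1,0,0,1; 0,1,-1,0], !![1,0,0,-1; 0,1,1,0], !![1,0,0,-1; 0,1,-1,0],
  !![1,1,0,0; 1,-1,0,0], !![1,0,1,0; 1,0,-1,0], !![1,0,0,1; 1,0,0,-1],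
  !![0,1,1,0; 0,1,-1,0], !![0,1,0,1; 0,1,0,-1], !![0,0,1,1; 0,0,1,-1]]

local notation "B" => d4PlaneGenerators

theorem d4PlaneGenerators_mul_transpose_self : ∀ i, B i * (B i)ᵀ = 2 • 1 := by decide

theorem d4PlaneGenerators_row_sq_sum : ∀ i k, ∑ l, B i k l ^ 2 = 2 := by decide

theorem d4PlaneGenerators_transpose_mul_self_injective :
    Function.Injective fun i => (B i)ᵀ * B i := by
  unfold Function.Injective; decide

theorem hasScaledD4PrincipalAngles_d4PlaneGenerators :
    ∀ i j, i ≠ j → HasScaledD4PrincipalAngles (B i * (B j)ᵀ) := by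
  unfold HasScaledD4PrincipalAngles; decide

theorem d4PlaneGenerators_zero_mul_transpose_one_ne_zero : B 0 * (B 1)ᵀ ≠ 0 := by decide

noncomputable def d4Planes (i : Fin 18) : Matrix (Fin 2) (Fin 4) ℝ :=
  (√2)⁻¹ • (B i).map (Int.castRingHom ℝ)

theorem inv_sqrt_two_mul_self : (√2)⁻¹ * (√2)⁻¹ = (1 / 2 : ℝ) := by
  rw [← mul_inv, Real.mul_self_sqrt zero_le_two, one_div]

theorem d4Planes_mul_transpose (i j : Fin 18) :
    d4Planes i * (d4Planes j)ᵀ = (1 / 2 : ℝ) • (B i * (B j)ᵀ).map (Int.castRingHom ℝ) := by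
  rw [d4Planes, d4Planes, smul_map_mul_transpose_smul_map, inv_sqrt_two_mul_self]

theorem d4Planes_transpose_mul_self (i : Fin 18) :
    (d4Planes i)ᵀ * d4Planes i = (1 / 2 : ℝ) • ((B i)ᵀ * B i).map (Int.castRingHom ℝ) := by
  rw [d4Planes, transpose_smul_map_mul_smul_map, inv_sqrt_two_mul_self]

theorem d4Planes_mul_transpose_self (i : Fin 18) : d4Planes i * (d4Planes i)ᵀ = 1 := by
  rw [d4Planes_mul_transpose, d4PlaneGenerators_mul_transpose_self, ← RingHom.mapMatrix_apply,
    map_nsmul, map_one, smul_comm, ← smul_assoc]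
  norm_num

theorem d4Planes_apply (i : Fin 18) (k : Fin 2) (l : Fin 4) :
    d4Planes i k l = B i k l / √2 := by
  simp [d4Planes, div_eq_inv_mul]

theorem d4Planes_transpose_mul_self_injective :
    Function.Injective fun i => (d4Planes i)ᵀ * d4Planes i := by
  intro i j h
  simp only [d4Planes_transpose_mul_self] at h
  exact d4PlaneGenerators_transpose_mul_self_injective <|
    Matrix.map_injective (Int.castRingHom ℝ).injective_int (smul_right_injective _ (by norm_num) h)

theorem hasD4PrincipalAngles_d4Planes {i j : Fin 18} (hij : i ≠ j) :
    HasD4PrincipalAngles (d4Planes i * (d4Planes j)ᵀ) := by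
  rw [d4Planes_mul_transpose]
  exact (hasScaledD4PrincipalAngles_d4PlaneGenerators i j hij).half_smul_map

theorem d4Planes_zero_mul_transpose_one_ne_zero : d4Planes 0 * (d4Planes 1)ᵀ ≠ 0 := by
  rw [d4Planes_mul_transpose]
  refine smul_ne_zero (by norm_num) ?_
  simpa using (Matrix.map_injective (Int.castRingHom ℝ).injective_int).ne
    d4PlaneGenerators_zero_mul_transpose_one_ne_zero

/-- There exist 18 distinct two-dimensional subspaces of `ℝ⁴` — the planes spanned
by pairs of mutually perpendicular minimal vectors of the `D₄` lattice (each row of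
each orthonormal generator matrix is `1/√2` times a vector with entries in
`{-1,0,1}` and squared length `2`) — such that for each pair of planes, with
`M = A i * (A j)ᵀ`, the principal angles are `(π/4, π/4)` (`M Mᵀ = (1/2)•1`),
`(0, π/2)` (`M Mᵀ` idempotent of trace `1`), or `(π/2, π/2)` (`M = 0`); the minimum
squared chordal distance `2 - trace (M Mᵀ)` equals `1 = n(m-n)/m`, achieving the
orthoplex bound for `N = 18 > m(m+1)/2 = 10`. -/
theorem eighteen_planes_in_R4 :
    ∃ A : Fin 18 → Matrix (Fin 2) (Fin 4) ℝ,
      (∀ i, A i * (A i)ᵀ = 1) ∧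
      (∀ i k, ∃ v : Fin 4 → ℝ, (∀ l, v l = -1 ∨ v l = 0 ∨ v l = 1) ∧
        (∑ l, v l ^ 2 = 2) ∧ (∀ l, A i k l = v l / Real.sqrt 2)) ∧
      (∀ i j, i ≠ j → (A i)ᵀ * A i ≠ (A j)ᵀ * A j) ∧
      (∀ i j, i ≠ j →
        ((A i * (A j)ᵀ) * (A i * (A j)ᵀ)ᵀ = ((1 : ℝ) / 2) • 1 ∨
         (((A i * (A j)ᵀ) * (A i * (A j)ᵀ)ᵀ) * ((A i * (A j)ᵀ) * (A i * (A j)ᵀ)ᵀ) =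
            (A i * (A j)ᵀ) * (A i * (A j)ᵀ)ᵀ ∧
          Matrix.trace ((A i * (A j)ᵀ) * (A i * (A j)ᵀ)ᵀ) = 1) ∨
         A i * (A j)ᵀ = 0)) ∧
      (∀ i j, i ≠ j →
        (1 : ℝ) ≤ 2 - Matrix.trace ((A i * (A j)ᵀ) * (A i * (A j)ᵀ)ᵀ)) ∧
      (∃ i j, i ≠ j ∧
        (2 : ℝ) - Matrix.trace ((A i * (A j)ᵀ) * (A i * (A j)ᵀ)ᵀ) = 1) := by
  refine ⟨d4Planes, d4Planes_mul_transpose_self, fun i k => ?_,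
    fun i j hij h => hij (d4Planes_transpose_mul_self_injective h),
    fun i j hij => hasD4PrincipalAngles_d4Planes hij,
    fun i j hij => ?_, ⟨0, 1, by decide, ?_⟩⟩
  · have hrow : ∑ l, B i k l ^ 2 = 2 := d4PlaneGenerators_row_sq_sum i k
    refine ⟨fun l => B i k l, fun l => ?_, by beta_reduce; exact_mod_cast hrow, d4Planes_apply i k⟩
    rcases Int.eq_neg_one_or_zero_or_one_of_sum_sq_eq_two hrow l with h | h | h <;> simp [h]
  · linarith [(hasD4PrincipalAngles_d4Planes hij).trace_mul_transpose_le_one]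
  · rw [(hasD4PrincipalAngles_d4Planes (by decide)).trace_mul_transpose_eq_one
      d4Planes_zero_mul_transpose_one_ne_zero]
    norm_num
end

section
/- Let P, Q be 2-dimensional subspaces of R^4 represented by pairs of purely imaginary unit quaternions ±(ℓ,r) and ±(ℓ',r'). Let φ, ψ ∈ [0,π] be the angles between ℓ,ℓ' and r,r' respectively, adjusted by (φ,ψ) ↦ (π−φ, π−ψ) if φ+ψ > π so that φ+ψ ≤ π and φ ≤ ψ. Then the principal angles between P and Q are (ψ±φ)/2, and d_c²(P,Q) = 1 − cos ψ cos φ. -/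
open Quaternion Real
open scoped RealInnerProductSpace ComplexConjugate

/-!
Every purely imaginary unit quaternion is a conjugate `a i ā` of `i` by a unit quaternion, so
`l = a i ā`, `r = b i b̄`, and the plane fixed by `x ↦ l̄ x r` is `a ℂ b̄`; likewise `Q = a' ℂ b̄'`.
Splitting `ā a' = g₁ + g₂ j` and `b̄ b' = h₁ + h₂ j` with `gₖ, hₖ ∈ ℂ`, the pairing
`⟪a p b̄, a' q b̄'⟫` becomes the real bilinear form `⟪p, X q + Y q̄⟫` on `ℂ`, with `X = g₁ h̄₁` and
`Y = g₂ h̄₂`; rotating `p` and `q` diagonalises it with singular values `|X| ± |Y|`. Since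
`⟪l, l'⟫ = |g₁|² - |g₂|²` and `|g₁|² + |g₂|² = 1`, the angle hypothesis gives
`{|X|, |Y|} = {cos (φ/2) cos (ψ/2), sin (φ/2) sin (ψ/2)}`, and `|X| ∓ |Y|` are the cosines
`cos ((ψ ± φ)/2)`.
-/

theorem Submodule.mem_of_apply_eq_self {E : Type*} [NormedAddCommGroup E] [InnerProductSpace ℝ E]
    {K : Submodule ℝ E} [K.HasOrthogonalProjection] {f : E →ₗ[ℝ] E}
    (hK : ∀ x ∈ K, f x = x) (hK' : ∀ x ∈ Kᗮ, f x = -x) {x : E} (hx : f x = x) : x ∈ K := by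
  obtain ⟨y, hy, z, hz, rfl⟩ := K.exists_add_mem_mem_orthogonal x
  rw [map_add, hK y hy, hK' z hz, add_right_inj] at hx
  have hz0 : z = 0 := by linear_combination (norm := module) (-2⁻¹ : ℝ) • hx
  rwa [hz0, add_zero]

namespace Complex

theorem exists_norm_eq_one_mul_eq {X s : ℂ} (h : ‖X‖ = ‖s‖) : ∃ c : ℂ, ‖c‖ = 1 ∧ c * X = s := by
  rcases eq_or_ne X 0 with rfl | hX
  · exact ⟨1, norm_one, by rw [norm_zero, eq_comm, norm_eq_zero] at h; simp [h]⟩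
  · refine ⟨s / X, ?_, div_mul_cancel₀ s hX⟩
    rw [norm_div, h, div_self (h ▸ norm_ne_zero_iff.mpr hX)]

theorem exists_conj_mul_eq_and_conj_mul_conj_eq {X Y s t : ℂ} (hs : ‖X‖ = ‖s‖)
    (ht : ‖Y‖ = ‖t‖) :
    ∃ p q : ℂ, ‖p‖ = 1 ∧ ‖q‖ = 1 ∧ conj p * q * X = s ∧ conj p * conj q * Y = t := by
  obtain ⟨c, hc, hcX⟩ := exists_norm_eq_one_mul_eq hs
  obtain ⟨d, hd, hdY⟩ := exists_norm_eq_one_mul_eq ht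
  -- `p` is a square root of `conj (c d)` and `q = p c`.
  obtain ⟨p, hp⟩ := IsAlgClosed.exists_pow_nat_eq (conj (c * d)) two_pos
  have hpn : ‖p‖ = 1 := by
    rw [← pow_left_inj₀ (norm_nonneg p) zero_le_one two_ne_zero, ← norm_pow, hp]
    simp [hc, hd]
  have unit_conj_mul {u : ℂ} (hu : ‖u‖ = 1) : conj u * u = 1 := by
    rw [conj_mul', hu]; simp
  refine ⟨p, p * c, hpn, by rw [norm_mul, hpn, hc, one_mul], ?_, ?_⟩
  · rw [← mul_assoc, unit_conj_mul hpn, one_mul, hcX]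
  · calc conj p * conj (p * c) * Y = conj (p ^ 2) * conj c * Y := by
          simp only [map_mul, map_pow]; ring
      _ = (conj c * c) * (d * Y) := by rw [hp, conj_conj]; ring
      _ = t := by rw [unit_conj_mul hc, one_mul, hdY]

theorem inner_mul_mul_add_conj (X Y p q u v : ℂ) :
    ⟪p * u, X * (q * v) + Y * conj (q * v)⟫ =
      ⟪u, conj p * q * X * v + conj p * conj q * Y * conj v⟫ := by
  rw [Complex.inner, Complex.inner]
  simp only [map_mul]
  ring_nf

theorem inner_self_mul_I (p : ℂ) : ⟪p, p * I⟫ = 0 := by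
  simp [Complex.inner, Complex.mul_re, Complex.mul_im]
  ring

theorem exists_orthonormal_inner_mul_add_conj_eq (X Y : ℂ) {x y : ℝ} (hx : 0 ≤ x) (hy : 0 ≤ y)
    (h : (‖X‖ = x ∧ ‖Y‖ = y) ∨ (‖X‖ = y ∧ ‖Y‖ = x)) :
    ∃ p₁ p₂ q₁ q₂ : ℂ, ‖p₁‖ = 1 ∧ ‖p₂‖ = 1 ∧ ‖q₁‖ = 1 ∧ ‖q₂‖ = 1 ∧
      ⟪p₁, p₂⟫ = 0 ∧ ⟪q₁, q₂⟫ = 0 ∧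
      ⟪p₁, X * q₁ + Y * conj q₁⟫ = x - y ∧ ⟪p₂, X * q₂ + Y * conj q₂⟫ = x + y ∧
      ⟪p₁, X * q₂ + Y * conj q₂⟫ = 0 ∧ ⟪p₂, X * q₁ + Y * conj q₁⟫ = 0 := by
  rcases h with ⟨hX, hY⟩ | ⟨hX, hY⟩
  · obtain ⟨p, q, hp, hq, hpq, hpq'⟩ :=
      exists_conj_mul_eq_and_conj_mul_conj_eq (X := X) (Y := Y) (s := x) (t := -y)
        (by simp [hX, abs_of_nonneg hx]) (by simp [hY, abs_of_nonneg hy])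
    refine ⟨p * 1, p * I, q * 1, q * I, by simp [hp], by simp [hp], by simp [hq], by simp [hq],
      by rw [mul_one, inner_self_mul_I], by rw [mul_one, inner_self_mul_I], ?_, ?_, ?_, ?_⟩ <;>
    · rw [inner_mul_mul_add_conj, hpq, hpq']
      simp [Complex.inner, sub_eq_add_neg, add_comm]
  · obtain ⟨p, q, hp, hq, hpq, hpq'⟩ :=
      exists_conj_mul_eq_and_conj_mul_conj_eq (X := X) (Y := Y) (s := -y) (t := x)
        (by simp [hX, abs_of_nonneg hy]) (by simp [hY, abs_of_nonneg hx])
    refine ⟨p * 1, p * I, q * 1, q * -I, by simp [hp], by simp [hp], by simp [hq], by simp [hq],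
      by rw [mul_one, inner_self_mul_I],
      by rw [mul_one, mul_neg, inner_neg_right, inner_self_mul_I, neg_zero], ?_, ?_, ?_, ?_⟩ <;>
    · rw [inner_mul_mul_add_conj, hpq, hpq']
      simp [Complex.inner, sub_eq_add_neg, add_comm]

end Complex

theorem norm_eq_cos_half_and_norm_eq_sin_half {z w : ℂ} (hzw : ‖z‖ ^ 2 + ‖w‖ ^ 2 = 1) {θ : ℝ}
    (h0 : 0 ≤ θ) (hπ : θ ≤ π) (hθ : cos θ = ‖z‖ ^ 2 - ‖w‖ ^ 2) :
    ‖z‖ = cos (θ / 2) ∧ ‖w‖ = sin (θ / 2) := by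
  have hcos : cos (θ / 2) ^ 2 = 1 / 2 + cos θ / 2 := by
    rw [cos_sq, mul_div_cancel₀ θ two_ne_zero]
  constructor
  · rw [← sq_eq_sq₀ (norm_nonneg _) (cos_nonneg_of_mem_Icc ⟨by linarith, by linarith⟩)]
    linarith
  · rw [← sq_eq_sq₀ (norm_nonneg _) (sin_nonneg_of_nonneg_of_le_pi (by linarith) (by linarith)),
      sin_sq]
    linarith

theorem norms_mul_conj_of_cos_eq {z w z' w' : ℂ} (h : ‖z‖ ^ 2 + ‖w‖ ^ 2 = 1)
    (h' : ‖z'‖ ^ 2 + ‖w'‖ ^ 2 = 1) {φ ψ : ℝ} (hφ0 : 0 ≤ φ) (hφπ : φ ≤ π) (hψ0 : 0 ≤ ψ)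
    (hψπ : ψ ≤ π)
    (hangles :
      (cos φ = ‖z‖ ^ 2 - ‖w‖ ^ 2 ∧ cos ψ = ‖z'‖ ^ 2 - ‖w'‖ ^ 2) ∨
      (cos φ = -(‖z‖ ^ 2 - ‖w‖ ^ 2) ∧ cos ψ = -(‖z'‖ ^ 2 - ‖w'‖ ^ 2)) ∨
      (cos ψ = ‖z‖ ^ 2 - ‖w‖ ^ 2 ∧ cos φ = ‖z'‖ ^ 2 - ‖w'‖ ^ 2) ∨
      (cos ψ = -(‖z‖ ^ 2 - ‖w‖ ^ 2) ∧ cos φ = -(‖z'‖ ^ 2 - ‖w'‖ ^ 2))) :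
    (‖z * conj z'‖ = cos (φ / 2) * cos (ψ / 2) ∧ ‖w * conj w'‖ = sin (φ / 2) * sin (ψ / 2)) ∨
      (‖z * conj z'‖ = sin (φ / 2) * sin (ψ / 2) ∧
        ‖w * conj w'‖ = cos (φ / 2) * cos (ψ / 2)) := by
  simp only [norm_mul, Complex.norm_conj]
  have hw := (add_comm (‖w‖ ^ 2) _).trans h
  have hw' := (add_comm (‖w'‖ ^ 2) _).trans h'
  simp only [neg_sub] at hangles
  rcases hangles with ⟨hφ, hψ⟩ | ⟨hφ, hψ⟩ | ⟨hψ, hφ⟩ | ⟨hψ, hφ⟩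
  · obtain ⟨hz, hw⟩ := norm_eq_cos_half_and_norm_eq_sin_half h hφ0 hφπ hφ
    obtain ⟨hz', hw'⟩ := norm_eq_cos_half_and_norm_eq_sin_half h' hψ0 hψπ hψ
    exact .inl ⟨by rw [hz, hz'], by rw [hw, hw']⟩
  · obtain ⟨hw, hz⟩ := norm_eq_cos_half_and_norm_eq_sin_half hw hφ0 hφπ hφ
    obtain ⟨hw', hz'⟩ := norm_eq_cos_half_and_norm_eq_sin_half hw' hψ0 hψπ hψ
    exact .inr ⟨by rw [hz, hz'], by rw [hw, hw']⟩
  · obtain ⟨hz, hw⟩ := norm_eq_cos_half_and_norm_eq_sin_half h hψ0 hψπ hψ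
    obtain ⟨hz', hw'⟩ := norm_eq_cos_half_and_norm_eq_sin_half h' hφ0 hφπ hφ
    exact .inl ⟨by rw [hz, hz', mul_comm], by rw [hw, hw', mul_comm]⟩
  · obtain ⟨hw, hz⟩ := norm_eq_cos_half_and_norm_eq_sin_half hw hψ0 hψπ hψ
    obtain ⟨hw', hz'⟩ := norm_eq_cos_half_and_norm_eq_sin_half hw' hφ0 hφπ hφ
    exact .inr ⟨by rw [hz, hz', mul_comm], by rw [hw, hw', mul_comm]⟩

theorem sin_sq_add_div_two_add_sin_sq_sub_div_two (ψ φ : ℝ) :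
    sin ((ψ + φ) / 2) ^ 2 + sin ((ψ - φ) / 2) ^ 2 = 1 - cos ψ * cos φ := by
  rw [sin_sq, sin_sq, cos_sq, cos_sq, mul_div_cancel₀ _ two_ne_zero,
    mul_div_cancel₀ _ two_ne_zero, cos_add, cos_sub]
  ring

namespace Quaternion

-- The splitting `ℍ = ℂ ⊕ ℂ j`: `x = cpart x + jpart x * j`.
def cpart (x : ℍ[ℝ]) : ℂ := ⟨x.re, x.imI⟩
def jpart (x : ℍ[ℝ]) : ℂ := ⟨x.imJ, x.imK⟩

theorem re_mul_comm (x y : ℍ[ℝ]) : (x * y).re = (y * x).re := by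
  simp only [re_mul]; ring

theorem norm_sq_eq_cpart_add_jpart (x : ℍ[ℝ]) : ‖x‖ ^ 2 = ‖cpart x‖ ^ 2 + ‖jpart x‖ ^ 2 := by
  rw [sq, ← normSq_eq_norm_mul_self, normSq_def', Complex.sq_norm, Complex.sq_norm,
    Complex.normSq_apply, Complex.normSq_apply]
  simp only [cpart, jpart]; ring

theorem star_mul_self_of_norm_eq_one {a : ℍ[ℝ]} (ha : ‖a‖ = 1) : star a * a = 1 := by
  rw [star_mul_self, normSq_eq_norm_mul_self, ha, mul_one, coe_one]

theorem norm_coeComplex (z : ℂ) : ‖(z : ℍ[ℝ])‖ = ‖z‖ := by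
  rw [← sq_eq_sq₀ (norm_nonneg _) (norm_nonneg _), norm_sq_eq_cpart_add_jpart]
  simp [cpart, jpart, Complex.sq_norm, Complex.normSq_apply]

theorem inner_mul_coe_mul_star (a b c d : ℍ[ℝ]) (p q : ℂ) :
    ⟪a * p * star b, c * q * star d⟫ =
      ⟪p, cpart (star a * c) * conj (cpart (star b * d)) * q +
        jpart (star a * c) * conj (jpart (star b * d)) * conj q⟫ := by
  rw [inner_def, Complex.inner,
    show a * p * star b * star (c * q * star d) = a * (p * (star b * d) * star (q : ℍ[ℝ]) * star c)
      by simp only [star_mul, star_star, mul_assoc],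
    re_mul_comm, mul_assoc _ (star c), show star c * a = star (star a * c) by simp]
  generalize star a * c = g, star b * d = h
  simp [cpart, jpart, re_mul, imI_mul, imJ_mul, imK_mul, Complex.mul_re, Complex.mul_im]
  ring

theorem inner_mul_coe_mul_star_of_norm_eq_one {a b : ℍ[ℝ]} (ha : ‖a‖ = 1) (hb : ‖b‖ = 1)
    (p q : ℂ) : ⟪a * p * star b, a * q * star b⟫ = ⟪p, q⟫ := by
  simp [inner_mul_coe_mul_star, star_mul_self_of_norm_eq_one ha,
    star_mul_self_of_norm_eq_one hb, cpart, jpart]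

theorem norm_mul_coe_mul_star {a b : ℍ[ℝ]} (ha : ‖a‖ = 1) (hb : ‖b‖ = 1) (p : ℂ) :
    ‖a * p * star b‖ = ‖p‖ := by
  rw [norm_mul, norm_mul, norm_star, ha, hb, one_mul, mul_one, norm_coeComplex]

theorem inner_conj_I (a c : ℍ[ℝ]) :
    ⟪a * Complex.I * star a, c * Complex.I * star c⟫ =
      ‖cpart (star a * c)‖ ^ 2 - ‖jpart (star a * c)‖ ^ 2 := by
  rw [inner_mul_coe_mul_star, Complex.inner, Complex.mul_conj, Complex.mul_conj]
  simp [Complex.mul_re, ← Complex.normSq_eq_norm_sq, sub_eq_add_neg]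

theorem exists_norm_eq_one_conj_I {l : ℍ[ℝ]} (hl : l.re = 0) (hln : ‖l‖ = 1) :
    ∃ a : ℍ[ℝ], ‖a‖ = 1 ∧ a * Complex.I * star a = l := by
  set i : ℍ[ℝ] := ((Complex.I : ℂ) : ℍ[ℝ])
  -- `q = 1 - l i` satisfies `q i = i + l = l q`; it vanishes only for `l = -i`, where `j` works.
  by_cases hli : l = -i
  · obtain ⟨j, hj⟩ : ∃ j : ℍ[ℝ], j.re = 0 ∧ j.imI = 0 ∧ j.imJ = 1 ∧ j.imK = 0 :=
      ⟨⟨0, 0, 1, 0⟩, rfl, rfl, rfl, rfl⟩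
    refine ⟨j, ?_, ?_⟩
    · rw [← sq_eq_sq₀ (norm_nonneg _) zero_le_one, sq, ← normSq_eq_norm_mul_self, normSq_def']
      simp [hj]
    · rw [hli]; ext <;> simp [i, hj, re_mul, imI_mul, imJ_mul, imK_mul]
  have hll : l * l = -1 := by
    rw [← sq, sq_eq_neg_normSq.mpr hl, normSq_eq_norm_mul_self, hln, mul_one, coe_one]
  have hii : i * i = -1 := by ext <;> simp [i]
  set q := 1 - l * i
  have hq : q ≠ 0 := by
    intro h
    apply hli
    calc l = -(l * (i * i)) := by rw [hii]; noncomm_ring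
      _ = -((1 - q) * i) := by simp only [q, sub_sub_cancel, mul_assoc]
      _ = -i := by rw [h, sub_zero, one_mul]
  have hqi : q * i = l * q := by
    simp only [q, sub_mul, mul_sub, one_mul, mul_one, mul_assoc, hii, ← mul_assoc l l, hll]
    noncomm_ring
  refine ⟨‖q‖⁻¹ • q, by simp [norm_smul, hq], ?_⟩
  rw [star_smul, smul_mul_assoc, smul_mul_assoc, mul_smul_comm, smul_smul, hqi, mul_assoc,
    self_mul_star, normSq_eq_norm_mul_self, mul_coe_eq_smul, smul_smul]
  field_simp
  simp

theorem conj_I_mul_mul_coe_mul_star_mul_conj_I {a b : ℍ[ℝ]} (ha : ‖a‖ = 1) (hb : ‖b‖ = 1)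
    (p : ℂ) :
    star (a * Complex.I * star a) * (a * p * star b) * (b * Complex.I * star b) =
      a * p * star b := by
  have hI : star ((Complex.I : ℂ) : ℍ[ℝ]) * p * Complex.I = p := by
    ext <;> simp [re_mul, imI_mul, imJ_mul, imK_mul]
  calc _ = a * star (Complex.I : ℍ[ℝ]) * (star a * a) * p * (star b * b) * Complex.I * star b := by
        simp only [star_mul, star_star, mul_assoc]
    _ = a * p * star b := by
        rw [star_mul_self_of_norm_eq_one ha, star_mul_self_of_norm_eq_one hb, mul_one, mul_one,
          mul_assoc a, mul_assoc a, hI]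

theorem norm_sq_cpart_add_norm_sq_jpart_star_mul {a c : ℍ[ℝ]} (ha : ‖a‖ = 1) (hc : ‖c‖ = 1) :
    ‖cpart (star a * c)‖ ^ 2 + ‖jpart (star a * c)‖ ^ 2 = 1 := by
  rw [← norm_sq_eq_cpart_add_jpart, norm_mul, norm_star, ha, hc]
  norm_num

theorem mul_coe_mul_star_mem {P : Submodule ℝ ℍ[ℝ]} {a b : ℍ[ℝ]} (ha : ‖a‖ = 1) (hb : ‖b‖ = 1)
    (hP : ∀ x ∈ P, star (a * Complex.I * star a) * x * (b * Complex.I * star b) = x)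
    (hP' : ∀ x ∈ Pᗮ, star (a * Complex.I * star a) * x * (b * Complex.I * star b) = -x)
    (p : ℂ) : a * p * star b ∈ P :=
  Submodule.mem_of_apply_eq_self
    (f := (LinearMap.mulRight ℝ (b * Complex.I * star b)).comp
      (LinearMap.mulLeft ℝ (star (a * Complex.I * star a))))
    hP hP' (conj_I_mul_mul_coe_mul_star_mul_conj_I ha hb p)

end Quaternion

theorem principal_angles_from_quaternions_general
    (l r l' r' : ℍ[ℝ])
    (hl : l.re = 0) (hr : r.re = 0) (hl' : l'.re = 0) (hr' : r'.re = 0)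
    (hln : ‖l‖ = 1) (hrn : ‖r‖ = 1) (hl'n : ‖l'‖ = 1) (hr'n : ‖r'‖ = 1)
    (P Q : Submodule ℝ ℍ[ℝ])
    (hP : ∀ x ∈ P, star l * x * r = x) (hP' : ∀ x ∈ Pᗮ, star l * x * r = -x)
    (hQ : ∀ x ∈ Q, star l' * x * r' = x) (hQ' : ∀ x ∈ Qᗮ, star l' * x * r' = -x)
    (φ ψ : ℝ) (hφ0 : 0 ≤ φ) (hφψ : φ ≤ ψ) (hψπ : ψ ≤ π)
    (hangles :
      (Real.cos φ = ⟪l, l'⟫ ∧ Real.cos ψ = ⟪r, r'⟫) ∨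
      (Real.cos φ = -⟪l, l'⟫ ∧ Real.cos ψ = -⟪r, r'⟫) ∨
      (Real.cos ψ = ⟪l, l'⟫ ∧ Real.cos φ = ⟪r, r'⟫) ∨
      (Real.cos ψ = -⟪l, l'⟫ ∧ Real.cos φ = -⟪r, r'⟫)) :
    (∃ u₁ u₂ v₁ v₂ : ℍ[ℝ],
      u₁ ∈ P ∧ u₂ ∈ P ∧ v₁ ∈ Q ∧ v₂ ∈ Q ∧
      ‖u₁‖ = 1 ∧ ‖u₂‖ = 1 ∧ ‖v₁‖ = 1 ∧ ‖v₂‖ = 1 ∧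
      ⟪u₁, u₂⟫ = 0 ∧ ⟪v₁, v₂⟫ = 0 ∧
      ⟪u₁, v₁⟫ = Real.cos ((ψ + φ) / 2) ∧
      ⟪u₂, v₂⟫ = Real.cos ((ψ - φ) / 2) ∧
      ⟪u₁, v₂⟫ = 0 ∧ ⟪u₂, v₁⟫ = 0) ∧
    Real.sin ((ψ + φ) / 2) ^ 2 + Real.sin ((ψ - φ) / 2) ^ 2 =
      1 - Real.cos ψ * Real.cos φ := by
  obtain ⟨a, ha, rfl⟩ := exists_norm_eq_one_conj_I hl hln
  obtain ⟨b, hb, rfl⟩ := exists_norm_eq_one_conj_I hr hrn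
  obtain ⟨a', ha', rfl⟩ := exists_norm_eq_one_conj_I hl' hl'n
  obtain ⟨b', hb', rfl⟩ := exists_norm_eq_one_conj_I hr' hr'n
  have hφπ : φ ≤ π := hφψ.trans hψπ
  have hψ0 : 0 ≤ ψ := hφ0.trans hφψ
  rw [inner_conj_I, inner_conj_I] at hangles
  have hXY := norms_mul_conj_of_cos_eq (norm_sq_cpart_add_norm_sq_jpart_star_mul ha ha')
    (norm_sq_cpart_add_norm_sq_jpart_star_mul hb hb') hφ0 hφπ hψ0 hψπ hangles
  obtain ⟨p₁, p₂, q₁, q₂, hp₁, hp₂, hq₁, hq₂, hp, hq, h11, h22, h12, h21⟩ :=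
    Complex.exists_orthonormal_inner_mul_add_conj_eq _ _
      (mul_nonneg (cos_nonneg_of_mem_Icc ⟨by linarith, by linarith⟩)
        (cos_nonneg_of_mem_Icc ⟨by linarith, by linarith⟩))
      (mul_nonneg (sin_nonneg_of_nonneg_of_le_pi (by linarith) (by linarith))
        (sin_nonneg_of_nonneg_of_le_pi (by linarith) (by linarith))) hXY
  refine ⟨⟨a * p₁ * star b, a * p₂ * star b, a' * q₁ * star b', a' * q₂ * star b',
    mul_coe_mul_star_mem ha hb hP hP' p₁, mul_coe_mul_star_mem ha hb hP hP' p₂,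
    mul_coe_mul_star_mem ha' hb' hQ hQ' q₁, mul_coe_mul_star_mem ha' hb' hQ hQ' q₂,
    by rwa [norm_mul_coe_mul_star ha hb], by rwa [norm_mul_coe_mul_star ha hb],
    by rwa [norm_mul_coe_mul_star ha' hb'], by rwa [norm_mul_coe_mul_star ha' hb'],
    by rwa [inner_mul_coe_mul_star_of_norm_eq_one ha hb],
    by rwa [inner_mul_coe_mul_star_of_norm_eq_one ha' hb'],
    by rw [inner_mul_coe_mul_star, h11, add_div, cos_add]; ring,
    by rw [inner_mul_coe_mul_star, h22, sub_div, cos_sub]; ring,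
    by rw [inner_mul_coe_mul_star, h12], by rw [inner_mul_coe_mul_star, h21]⟩,
    sin_sq_add_div_two_add_sin_sq_sub_div_two ψ φ⟩

/-- Let `P`, `Q` be 2-dimensional subspaces of `ℝ⁴ = ℍ` represented by pairs
`±(l,r)`, `±(l',r')` of purely imaginary unit quaternions (via the involutions
`x ↦ l̄ x r` fixing the plane and negating its complement). Let `φ ≤ ψ` in `[0,π]`
with `φ + ψ ≤ π` be the angles between `l,l'` and `r,r'`, adjusted by
`(φ,ψ) ↦ (π-φ, π-ψ)` (i.e. negating both cosines) if necessary. Then the principal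
angles between `P` and `Q` are `(ψ±φ)/2` — there are orthonormal principal bases
`u₁,u₂` of `P` and `v₁,v₂` of `Q` with `⟪uₐ,v_b⟫` the diagonal matrix of their
cosines — and `d_c²(P,Q) = 1 - cos ψ · cos φ`. -/
theorem principal_angles_from_quaternions
    (l r l' r' : ℍ[ℝ])
    (hl : l.re = 0) (hr : r.re = 0) (hl' : l'.re = 0) (hr' : r'.re = 0)
    (hln : ‖l‖ = 1) (hrn : ‖r‖ = 1) (hl'n : ‖l'‖ = 1) (hr'n : ‖r'‖ = 1)
    (P Q : Submodule ℝ ℍ[ℝ])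
    (hPdim : Module.finrank ℝ P = 2) (hQdim : Module.finrank ℝ Q = 2)
    (hP : ∀ x ∈ P, star l * x * r = x) (hP' : ∀ x ∈ Pᗮ, star l * x * r = -x)
    (hQ : ∀ x ∈ Q, star l' * x * r' = x) (hQ' : ∀ x ∈ Qᗮ, star l' * x * r' = -x)
    (φ ψ : ℝ) (hφ0 : 0 ≤ φ) (hφψ : φ ≤ ψ) (hψπ : ψ ≤ π) (hsum : φ + ψ ≤ π)
    (hangles :
      (Real.cos φ = ⟪l, l'⟫ ∧ Real.cos ψ = ⟪r, r'⟫) ∨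
      (Real.cos φ = -⟪l, l'⟫ ∧ Real.cos ψ = -⟪r, r'⟫) ∨
      (Real.cos ψ = ⟪l, l'⟫ ∧ Real.cos φ = ⟪r, r'⟫) ∨
      (Real.cos ψ = -⟪l, l'⟫ ∧ Real.cos φ = -⟪r, r'⟫)) :
    (∃ u₁ u₂ v₁ v₂ : ℍ[ℝ],
      u₁ ∈ P ∧ u₂ ∈ P ∧ v₁ ∈ Q ∧ v₂ ∈ Q ∧
      ‖u₁‖ = 1 ∧ ‖u₂‖ = 1 ∧ ‖v₁‖ = 1 ∧ ‖v₂‖ = 1 ∧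
      ⟪u₁, u₂⟫ = 0 ∧ ⟪v₁, v₂⟫ = 0 ∧
      ⟪u₁, v₁⟫ = Real.cos ((ψ + φ) / 2) ∧
      ⟪u₂, v₂⟫ = Real.cos ((ψ - φ) / 2) ∧
      ⟪u₁, v₂⟫ = 0 ∧ ⟪u₂, v₁⟫ = 0) ∧
    Real.sin ((ψ + φ) / 2) ^ 2 + Real.sin ((ψ - φ) / 2) ^ 2 =
      1 - Real.cos ψ * Real.cos φ :=
  principal_angles_from_quaternions_general l r l' r' hl hr hl' hr' hln hrn hl'n hr'n P Q hP hP' hQ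
    hQ' φ ψ hφ0 hφψ hψπ hangles
end

section
/- If C is a binary code of length m with M codewords, minimum Hamming distance d, closed under complementation, then writing codewords as ±1-vectors yields M/2 lines through the origin in R^m such that the squared cosine of the angle between any two distinct lines is at most (1 − 2d/m)², i.e., min squared chordal distance d_c² ≥ 4d(m−d)/m². -/
/-!
The `±1`-vectors of words at Hamming distance `h` have inner product `m - 2h`, and replacing
one word by its complement turns `h` into `m - h`. Two codewords spanning distinct lines are
neither equal nor complementary, so both `h` and `m - h` are at least `d`, whence
`|m - 2h| ≤ m - 2d`. The lines are in bijection with the complementary pairs of codewords,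
so there are `M/2` of them.
-/

open Finset

/-- The `±1`-vector associated to a binary word `w` of length `m`. -/
def signVec (m : ℕ) (w : Fin m → Bool) : Fin m → ℝ :=
  fun i => if w i then (-1 : ℝ) else 1

/-- The line through the origin in `ℝ^m` spanned by the `±1`-vector of `w`. -/
def codeLine (m : ℕ) (w : Fin m → Bool) : Submodule ℝ (Fin m → ℝ) :=
  Submodule.span ℝ {signVec m w}

lemma signVec_not (m : ℕ) (w : Fin m → Bool) :
    signVec m (fun i => !w i) = -signVec m w := by
  funext i
  cases h : w i <;> simp [signVec, h]

lemma codeLine_not (m : ℕ) (w : Fin m → Bool) :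
    codeLine m (fun i => !w i) = codeLine m w := by
  rw [codeLine, codeLine, signVec_not, ← Set.neg_singleton, Submodule.span_neg]

lemma signVec_mul_signVec (m : ℕ) (w w' : Fin m → Bool) (i : Fin m) :
    signVec m w i * signVec m w' i = if w i = w' i then 1 else -1 := by
  cases h : w i <;> cases h' : w' i <;> simp [signVec, h, h']

lemma codeLine_eq_codeLine_iff {m : ℕ} (hm : 0 < m) {w w' : Fin m → Bool} :
    codeLine m w = codeLine m w' ↔ w' = w ∨ w' = fun i => !w i := by
  refine ⟨fun h => ?_, ?_⟩
  · obtain ⟨u, hu⟩ := Submodule.span_singleton_eq_span_singleton.mp h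
    -- `u = s i * s' i` for the two `±1`-vectors `s, s'`, since `s i * s i = 1`
    have hu_eq : ∀ i, (u : ℝ) = if w i = w' i then 1 else -1 := fun i => by
      rw [← signVec_mul_signVec, ← congrFun hu i, Pi.smul_apply, Units.smul_def, smul_eq_mul,
        ← mul_assoc, mul_comm _ (u : ℝ), mul_assoc, signVec_mul_signVec, if_pos rfl, mul_one]
    have hconst : ∀ i, w i = w' i ↔ w ⟨0, hm⟩ = w' ⟨0, hm⟩ := fun i => by
      have := (hu_eq i).symm.trans (hu_eq ⟨0, hm⟩)
      split_ifs at this <;> first | tauto | norm_num at this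
    by_cases h0 : w ⟨0, hm⟩ = w' ⟨0, hm⟩
    · exact .inl (funext fun i => ((hconst i).mpr h0).symm)
    · refine .inr (funext fun i => ?_)
      have := (hconst i).not.mpr h0
      revert this
      cases w i <;> cases w' i <;> simp
  · rintro (rfl | rfl)
    · rfl
    · exact (codeLine_not m w).symm

lemma sum_signVec_mul_signVec (m : ℕ) (w w' : Fin m → Bool) :
    ∑ i, signVec m w i * signVec m w' i = (m : ℝ) - 2 * hammingDist w w' := by
  have hsplit : (#{i | w i = w' i} : ℝ) + #{i | ¬ w i = w' i} = m := by
    rw [← Nat.cast_add, card_filter_add_card_filter_not, card_univ, Fintype.card_fin]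
  simp only [signVec_mul_signVec, sum_ite, sum_const, nsmul_eq_mul, mul_one, mul_neg_one,
    hammingDist, ne_eq]
  linarith

lemma hammingDist_add_hammingDist_not {ι : Type*} [Fintype ι] (v w : ι → Bool) :
    hammingDist v w + hammingDist (fun i => !v i) w = Fintype.card ι := by
  have hnot : hammingDist (fun i => !v i) w = #{i | ¬ v i ≠ w i} := by
    unfold hammingDist
    congr 1
    ext i
    cases v i <;> cases w i <;> simp
  rw [hnot, hammingDist, card_filter_add_card_filter_not, card_univ]

lemma card_image_eq_card_div_two {α β : Type*} [DecidableEq β] {f : α → β} {s : Finset α}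
    (σ : α → α) (hσs : ∀ a ∈ s, σ a ∈ s) (hσ : ∀ a, σ a ≠ a)
    (hf : ∀ a b, f a = f b ↔ b = a ∨ b = σ a) : #(s.image f) = #s / 2 := by
  classical
  suffices #s = #(s.image f) * 2 by omega
  rw [card_eq_sum_card_image f s]
  refine sum_const_nat fun b hb => ?_
  obtain ⟨a, ha, rfl⟩ := mem_image.mp hb
  have hfiber : {x ∈ s | f x = f a} = {a, σ a} := by
    ext x
    rw [mem_filter, eq_comm, hf, mem_insert, mem_singleton]
    constructor
    · exact And.right
    · rintro (rfl | rfl)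
      · exact ⟨ha, .inl rfl⟩
      · exact ⟨hσs _ ha, .inr rfl⟩
  rw [hfiber, card_pair (hσ a).symm]

lemma sq_div_le_one_sub_sq {m d x y : ℝ} (hm : 0 < m) (hx : d ≤ x) (hy : d ≤ y)
    (hxy : x + y = m) :
    ((m - 2 * x) / m) ^ 2 ≤ (1 - 2 * d / m) ^ 2 := by
  rw [one_sub_div hm.ne', div_pow, div_pow]
  exact div_le_div_of_nonneg_right (sq_le_sq' (by linarith) (by linarith)) (by positivity)

lemma one_sub_one_sub_sq {m d : ℝ} (hm : m ≠ 0) :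
    1 - (1 - 2 * d / m) ^ 2 = 4 * d * (m - d) / m ^ 2 := by
  field_simp
  ring

theorem lines_from_binary_code_general (m M d : ℕ) (hm : 0 < m)
    (C : Finset (Fin m → Bool))
    (hM : C.card = M)
    (hcompl : ∀ w ∈ C, (fun i => ! w i) ∈ C)
    (hd : ∀ w ∈ C, ∀ w' ∈ C, w ≠ w' → d ≤ hammingDist w w') :
    (@Finset.image _ _ (Classical.decEq _) (codeLine m) C).card = M / 2 ∧
    ∀ w ∈ C, ∀ w' ∈ C, codeLine m w ≠ codeLine m w' →
      ((∑ i, signVec m w i * signVec m w' i) / m) ^ 2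
          ≤ (1 - 2 * (d : ℝ) / m) ^ 2 ∧
      4 * (d : ℝ) * ((m : ℝ) - d) / (m : ℝ) ^ 2 ≤
        1 - ((∑ i, signVec m w i * signVec m w' i) / m) ^ 2 := by
  have hnot_ne : ∀ w : Fin m → Bool, (fun i => !w i) ≠ w := fun w h => by
    simpa using congrFun h ⟨0, hm⟩
  refine ⟨?_, fun w hw w' hw' hne => ?_⟩
  · rw [← hM]
    exact card_image_eq_card_div_two (fun w i => !w i) hcompl hnot_ne
      fun _ _ => codeLine_eq_codeLine_iff hm
  · rw [Ne, codeLine_eq_codeLine_iff hm, not_or] at hne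
    have hdist := hammingDist_add_hammingDist_not w w'
    rw [Fintype.card_fin] at hdist
    have h₁ := hd w hw w' hw' (Ne.symm hne.1)
    have h₂ := hd _ (hcompl w hw) w' hw' (Ne.symm hne.2)
    have hm' : (0 : ℝ) < m := by exact_mod_cast hm
    have hcos := sq_div_le_one_sub_sq hm' (Nat.cast_le.mpr h₁) (Nat.cast_le.mpr h₂)
      (by exact_mod_cast hdist)
    rw [sum_signVec_mul_signVec]
    refine ⟨hcos, ?_⟩
    rw [← one_sub_one_sub_sq hm'.ne']
    linarith

/-- If `C` is a binary code of length `m` with `M` codewords and minimum Hamming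
distance `d`, closed under complementation, then the `±1`-vectors of the codewords
span `M/2` lines through the origin in `ℝ^m`, and for any two codewords spanning
distinct lines the squared cosine of the angle between the lines is at most
`(1 - 2d/m)²`; equivalently the squared chordal distance `1 - (u·v)²` is at least
`4d(m-d)/m²`. -/
theorem lines_from_binary_code (m M d : ℕ) (hm : 0 < m)
    (C : Finset (Fin m → Bool))
    (hM : C.card = M)
    (hcompl : ∀ w ∈ C, (fun i => ! w i) ∈ C)
    (hd : ∀ w ∈ C, ∀ w' ∈ C, w ≠ w' → d ≤ hammingDist w w') (hd0 : 0 < d) :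
    (@Finset.image _ _ (Classical.decEq _) (codeLine m) C).card = M / 2 ∧
    ∀ w ∈ C, ∀ w' ∈ C, codeLine m w ≠ codeLine m w' →
      ((∑ i, signVec m w i * signVec m w' i) / m) ^ 2
          ≤ (1 - 2 * (d : ℝ) / m) ^ 2 ∧
      4 * (d : ℝ) * ((m : ℝ) - d) / (m : ℝ) ^ 2 ≤
        1 - ((∑ i, signVec m w i * signVec m w' i) / m) ^ 2 :=
  lines_from_binary_code_general m M d hm C hM hcompl hd
end
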